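/- arXiv:1905.10947 — 11 statements merged into one kernel-verified Lean document; each statement's English description precedes it below -/
import Mathlib

section
/- Let x ∈ ℝ^N and let v_1, …, v_M ∈ ℝ^N be orthonormal vectors (⟨v_m, v_n⟩ = δ_{mn}) each of which is entrywise non-negative. Then ‖x‖² − Σ_{m=1}^M ⟨x, v_m⟩² ≥ ‖x⁺‖² − Σ_{m=1}^M ⟨x⁺, v_m⟩². -/
open scoped RealInnerProductSpace

/-- Let `x ∈ ℝ^N` and `v 1, …, v M ∈ ℝ^N` be orthonormal vectors, each of
which is entrywise non-negative.  Then, with `xp = x⁺` the entrywise positive part of `x`,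
`‖x⁺‖² − Σ_m ⟨x⁺, v m⟩² ≤ ‖x‖² − Σ_m ⟨x, v m⟩²`. -/
theorem relu_decreases_residual {N M : ℕ}
    (x : EuclideanSpace ℝ (Fin N)) (v : Fin M → EuclideanSpace ℝ (Fin N))
    (hv : Orthonormal ℝ v) (hnonneg : ∀ m i, 0 ≤ v m i)
    (xp : EuclideanSpace ℝ (Fin N)) (hxp : ∀ i, xp i = max (x i) 0) :
    ‖xp‖ ^ 2 - ∑ m, ⟪xp, v m⟫ ^ 2 ≤ ‖x‖ ^ 2 - ∑ m, ⟪x, v m⟫ ^ 2 := by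
  set xm : EuclideanSpace ℝ (Fin N) := WithLp.toLp 2 (fun i => max (-(x i)) 0) with hxm
  have hxmi : ∀ i, xm i = max (-(x i)) 0 := fun i => rfl
  have hsub : x = xp - xm := by
    ext i
    simp only [PiLp.sub_apply, hxp, hxmi]
    rcases le_total (x i) 0 with h | h
    · rw [max_eq_right h, max_eq_left (by linarith)]; ring
    · rw [max_eq_left h, max_eq_right (by linarith)]; ring
  have horth : ⟪xp, xm⟫ = 0 := by
    rw [PiLp.inner_apply]
    apply Finset.sum_eq_zero
    intro i _
    simp only [RCLike.inner_apply, conj_trivial, hxp, hxmi]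
    rcases le_total (x i) 0 with h | h
    · rw [max_eq_right h]; ring
    · rw [max_eq_right (by linarith : -(x i) ≤ 0)]; ring
  -- inner products with v m are nonneg
  have hpnn : ∀ m, 0 ≤ ⟪xp, v m⟫ := by
    intro m
    rw [PiLp.inner_apply]
    apply Finset.sum_nonneg
    intro i _
    exact mul_nonneg (hnonneg m i) (by rw [star_trivial, hxp i]; exact le_max_right _ _)
  have hmnn : ∀ m, 0 ≤ ⟪xm, v m⟫ := by
    intro m
    rw [PiLp.inner_apply]
    apply Finset.sum_nonneg
    intro i _
    exact mul_nonneg (hnonneg m i) (by rw [star_trivial, hxmi i]; exact le_max_right _ _)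
  have hbessel : ∑ m, ⟪xm, v m⟫ ^ 2 ≤ ‖xm‖ ^ 2 := by
    have := hv.sum_inner_products_le (𝕜 := ℝ) (s := Finset.univ) xm
    calc ∑ m, ⟪xm, v m⟫ ^ 2 = ∑ m, ‖⟪v m, xm⟫‖ ^ 2 := by
          apply Finset.sum_congr rfl
          intro m _
          rw [real_inner_comm, Real.norm_eq_abs, sq_abs]
      _ ≤ ‖xm‖ ^ 2 := this
  have horth' : ⟪xm, xp⟫ = 0 := by rw [real_inner_comm]; exact horth
  have hnorm : ‖x‖ ^ 2 = ‖xp‖ ^ 2 + ‖xm‖ ^ 2 := by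
    rw [hsub, ← real_inner_self_eq_norm_sq, ← real_inner_self_eq_norm_sq,
      ← real_inner_self_eq_norm_sq, inner_sub_sub_self, horth, horth']
    ring
  have hinner : ∀ m, ⟪x, v m⟫ = ⟪xp, v m⟫ - ⟪xm, v m⟫ := by
    intro m; rw [hsub, inner_sub_left]
  have hcross : 0 ≤ ∑ m, ⟪xp, v m⟫ * ⟪xm, v m⟫ :=
    Finset.sum_nonneg fun m _ => mul_nonneg (hpnn m) (hmnn m)
  have hexp : ∀ m, ⟪x, v m⟫ ^ 2 =
      ⟪xp, v m⟫ ^ 2 - 2 * (⟪xp, v m⟫ * ⟪xm, v m⟫) + ⟪xm, v m⟫ ^ 2 := by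
    intro m; rw [hinner m]; ring
  simp only [hexp, Finset.sum_add_distrib, Finset.sum_sub_distrib, ← Finset.mul_sum]
  rw [hnorm]
  linarith
end

section
/- For every X ∈ ℝ^{N×C}, d_𝓜(σ(X)) ≤ d_𝓜(X). -/
open scoped Matrix

noncomputable section

attribute [local instance] Matrix.frobeniusNormedAddCommGroup

/-- Entrywise ReLU on `N × C` real matrices. -/
def relu {N C : ℕ} (X : Matrix (Fin N) (Fin C) ℝ) : Matrix (Fin N) (Fin C) ℝ :=
  Matrix.of fun n c => max (X n c) 0

/-- The subspace `𝓜 = {Σ_m e_m ⊗ w_m | w_m ∈ ℝ^C}` of `ℝ^{N×C}`. -/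
def Mspace {N C M : ℕ} (e : Fin M → EuclideanSpace ℝ (Fin N)) :
    Set (Matrix (Fin N) (Fin C) ℝ) :=
  {X | ∃ w : Fin M → Fin C → ℝ, X = ∑ m, Matrix.vecMulVec (e m) (w m)}

/-- Frobenius distance from `X` to the subspace `𝓜`. -/
def dM {N C M : ℕ} (e : Fin M → EuclideanSpace ℝ (Fin N))
    (X : Matrix (Fin N) (Fin C) ℝ) : ℝ :=
  Metric.infDist X (Mspace e)

/-- ReLU is 1-Lipschitz in Frobenius norm. -/
lemma relu_lip {N C : ℕ} (X Y : Matrix (Fin N) (Fin C) ℝ) :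
    dist (relu X) (relu Y) ≤ dist X Y := by
  rw [dist_eq_norm, dist_eq_norm, Matrix.frobenius_norm_def, Matrix.frobenius_norm_def]
  apply Real.rpow_le_rpow
  · positivity
  · refine Finset.sum_le_sum fun i _ => Finset.sum_le_sum fun j _ => ?_
    apply Real.rpow_le_rpow (norm_nonneg _) ?_ (by norm_num)
    simp only [Matrix.sub_apply, relu, Matrix.of_apply, Real.norm_eq_abs]
    exact abs_max_sub_max_le_abs _ _ 0
  · norm_num

/-- Orthonormal nonnegative vectors have disjoint supports. -/
lemma supp_disj {N M : ℕ} (e : Fin M → EuclideanSpace ℝ (Fin N)) (he : Orthonormal ℝ e)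
    (hnonneg : ∀ m i, 0 ≤ e m i) {m k : Fin M} (hmk : m ≠ k) (n : Fin N)
    (hm : e m n ≠ 0) : e k n = 0 := by
  have h0 : (inner ℝ (e m) (e k) : ℝ) = 0 := he.2 hmk
  rw [PiLp.inner_apply] at h0
  simp only [RCLike.inner_apply, starRingEnd_apply, star_trivial] at h0
  simp only [mul_comm (e k _)] at h0
  have hterm : ∀ i ∈ Finset.univ, (0:ℝ) ≤ e m i * e k i :=
    fun i _ => mul_nonneg (hnonneg m i) (hnonneg k i)
  have := (Finset.sum_eq_zero_iff_of_nonneg hterm).1 h0 n (Finset.mem_univ n)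
  rcases mul_eq_zero.1 this with h | h
  · exact absurd h hm
  · exact h

/-- ReLU maps `Mspace` into itself. -/
lemma relu_mem_Mspace {N C M : ℕ} (e : Fin M → EuclideanSpace ℝ (Fin N))
    (he : Orthonormal ℝ e) (hnonneg : ∀ m i, 0 ≤ e m i)
    {Y : Matrix (Fin N) (Fin C) ℝ} (hY : Y ∈ Mspace e) : relu Y ∈ Mspace e := by
  obtain ⟨w, rfl⟩ := hY
  refine ⟨fun m c => max (w m c) 0, ?_⟩
  ext n c
  simp only [relu, Matrix.of_apply, Matrix.sum_apply, Matrix.vecMulVec_apply]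
  by_cases h : ∃ m0, e m0 n ≠ 0
  · obtain ⟨m0, hm0⟩ := h
    have hz : ∀ m, m ≠ m0 → e m n = 0 := fun m hm => supp_disj e he hnonneg hm.symm n hm0
    rw [Finset.sum_eq_single m0 (fun m _ hm => by rw [hz m hm, zero_mul]) (by simp),
        Finset.sum_eq_single m0 (fun m _ hm => by rw [hz m hm, zero_mul]) (by simp)]
    rw [mul_max_of_nonneg _ _ (hnonneg m0 n), mul_zero]
  · push_neg at h
    simp [h]

/-- If `(e 1, …, e M)` is an orthonormal family of entrywise non-negative
vectors in `ℝ^N` (an orthonormal basis of the `M`-dimensional subspace `U`), then the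
entrywise ReLU does not increase the Frobenius distance to `𝓜`:
`d_𝓜(σ(X)) ≤ d_𝓜(X)` for every `X ∈ ℝ^{N×C}`. -/
theorem dM_relu_le {N C M : ℕ} (hN : 0 < N) (hC : 0 < C) (hM : 0 < M) (hMN : M ≤ N)
    (e : Fin M → EuclideanSpace ℝ (Fin N)) (he : Orthonormal ℝ e)
    (hnonneg : ∀ m i, 0 ≤ e m i)
    (X : Matrix (Fin N) (Fin C) ℝ) :
    dM e (relu X) ≤ dM e X := by
  have hne : (Mspace (C := C) e).Nonempty := ⟨0, fun _ => 0, by ext n c; simp [Matrix.sum_apply, Matrix.vecMulVec_apply]⟩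
  rw [dM, dM]
  refine le_of_forall_pos_le_add fun ε hε => ?_
  obtain ⟨y, hy, hdy⟩ := (Metric.infDist_lt_iff hne).1
    (lt_add_of_pos_right (Metric.infDist X (Mspace e)) hε)
  calc Metric.infDist (relu X) (Mspace e) ≤ dist (relu X) (relu y) :=
        Metric.infDist_le_dist_of_mem (relu_mem_Mspace e he hnonneg hy)
    _ ≤ dist X y := relu_lip X y
    _ ≤ Metric.infDist X (Mspace e) + ε := hdy.le
end
end

section
/- For every X ∈ ℝ^{N×C}, d_𝓜(PX) ≤ λ · d_𝓜(X). -/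
open scoped Matrix

noncomputable section

attribute [local instance] Matrix.frobeniusNormedAddCommGroup

open scoped RealInnerProductSpace

set_option maxHeartbeats 1000000
set_option synthInstance.maxHeartbeats 400000

/-- Column of a matrix, as an element of Euclidean space. -/
def colE {N C : ℕ} (A : Matrix (Fin N) (Fin C) ℝ) (c : Fin C) :
    EuclideanSpace ℝ (Fin N) := WithLp.toLp 2 (fun i => A i c)

lemma euclid_sum_apply {N : ℕ} {ι : Type*} (s : Finset ι)
    (f : ι → EuclideanSpace ℝ (Fin N)) (i : Fin N) :
    (∑ m ∈ s, f m) i = ∑ m ∈ s, f m i :=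
  map_sum (EuclideanSpace.proj (𝕜 := ℝ) i) f s

lemma frobenius_norm_eq_cols {N C : ℕ} (A : Matrix (Fin N) (Fin C) ℝ) :
    ‖A‖ = Real.sqrt (∑ c, ‖colE A c‖ ^ 2) := by
  rw [Matrix.frobenius_norm_def, ← Real.sqrt_eq_rpow, Finset.sum_comm]
  congr 1
  refine Finset.sum_congr rfl fun c _ => ?_
  rw [EuclideanSpace.norm_eq, Real.sq_sqrt (by positivity)]
  refine Finset.sum_congr rfl fun i _ => ?_
  rw [show ((2:ℝ)) = ((2:ℕ):ℝ) by norm_num, Real.rpow_natCast]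
  rfl

lemma span_repr {N M : ℕ} (e : Fin M → EuclideanSpace ℝ (Fin N))
    (he : Orthonormal ℝ e) {u : EuclideanSpace ℝ (Fin N)}
    (hu : u ∈ Submodule.span ℝ (Set.range e)) :
    (∑ m, ⟪e m, u⟫ • e m) = u := by
  induction hu using Submodule.span_induction with
  | mem x hx =>
    obtain ⟨k, rfl⟩ := hx
    have h := orthonormal_iff_ite.mp he
    simp only [h]
    simp [Finset.sum_ite_eq', Finset.mem_univ]
  | zero => simp
  | add x y _ _ hx hy =>
    simp only [inner_add_right, add_smul, Finset.sum_add_distrib, hx, hy]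
  | smul a x _ hx =>
    simp only [inner_smul_right, mul_smul, ← Finset.smul_sum, hx]

lemma mem_Mspace_iff {N C M : ℕ} (e : Fin M → EuclideanSpace ℝ (Fin N))
    (he : Orthonormal ℝ e) (A : Matrix (Fin N) (Fin C) ℝ) :
    A ∈ Mspace e ↔ ∀ c, colE A c ∈ Submodule.span ℝ (Set.range e) := by
  constructor
  · rintro ⟨w, rfl⟩ c
    have : colE (∑ m, Matrix.vecMulVec (e m) (w m)) c = ∑ m, w m c • e m := by
      ext i
      rw [euclid_sum_apply]
      simp only [colE, PiLp.toLp_apply, Matrix.sum_apply, Matrix.vecMulVec_apply, PiLp.smul_apply,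
        smul_eq_mul]
      exact Finset.sum_congr rfl fun m _ => mul_comm _ _
    rw [this]
    exact Submodule.sum_mem _ fun m _ =>
      Submodule.smul_mem _ _ (Submodule.subset_span ⟨m, rfl⟩)
  · intro h
    refine ⟨fun m c => ⟪e m, colE A c⟫, ?_⟩
    funext i c
    have h1 := span_repr e he (h c)
    have h2 : (∑ m, ⟪e m, colE A c⟫ • e m) i = colE A c i := by rw [h1]
    rw [euclid_sum_apply] at h2
    simp only [PiLp.smul_apply, smul_eq_mul] at h2
    simp only [Matrix.sum_apply, Matrix.vecMulVec_apply]
    rw [show A i c = colE A c i from rfl, ← h2]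
    exact Finset.sum_congr rfl fun m _ => (mul_comm _ _)

/-- Let `P ∈ ℝ^{N×N}` be symmetric, `U = span(e 1, …, e M)` an
`M`-dimensional subspace with an orthonormal basis of entrywise non-negative vectors,
invariant under `P`, and let `lam` be the operator norm of the restriction of `P` to `Uᗮ`.
Then `d_𝓜(P X) ≤ lam · d_𝓜(X)` for every `X ∈ ℝ^{N×C}`. -/
theorem dM_mul_left_le {N C M : ℕ} (hN : 0 < N) (hC : 0 < C) (hM : 0 < M) (hMN : M ≤ N)
    (P : Matrix (Fin N) (Fin N) ℝ) (hP : P.IsSymm)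
    (e : Fin M → EuclideanSpace ℝ (Fin N)) (he : Orthonormal ℝ e)
    (hnonneg : ∀ m i, 0 ≤ e m i)
    (U : Submodule ℝ (EuclideanSpace ℝ (Fin N)))
    (hU : U = Submodule.span ℝ (Set.range e))
    (hinv : ∀ u ∈ U, (WithLp.toLp 2 (P.mulVec u) : EuclideanSpace ℝ (Fin N)) ∈ U)
    (lam : ℝ)
    (hlam : lam = ‖LinearMap.toContinuousLinearMap ((Matrix.toEuclideanLin P).domRestrict Uᗮ)‖)
    (X : Matrix (Fin N) (Fin C) ℝ) :
    dM e (P * X) ≤ lam * dM e X := by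
  have hlam0 : 0 ≤ lam := by
    rw [hlam]
    exact norm_nonneg (LinearMap.toContinuousLinearMap ((Matrix.toEuclideanLin P).domRestrict Uᗮ))
  have hsym : ∀ i j, P j i = P i j := fun i j => congrFun (congrFun hP i) j
  -- orthogonal projections of the columns of X
  set Q : Fin C → EuclideanSpace ℝ (Fin N) :=
    fun c => (Submodule.orthogonalProjectionOnto U (colE X c) : EuclideanSpace ℝ (Fin N)) with hQ
  have hQmem : ∀ c, Q c ∈ U := fun c => (Submodule.orthogonalProjectionOnto U (colE X c)).2
  have hVmem : ∀ c, colE X c - Q c ∈ Uᗮ := fun c => by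
    have := Submodule.sub_starProjection_mem_orthogonal (K := U) (colE X c)
    rwa [Submodule.starProjection_apply] at this
  set XU : Matrix (Fin N) (Fin C) ℝ := Matrix.of (fun i c => Q c i) with hXU
  have hcolXU : ∀ c, colE XU c = Q c := fun c => rfl
  have hcolPA : ∀ (A : Matrix (Fin N) (Fin C) ℝ) c,
      colE (P * A) c = Matrix.toEuclideanLin P (colE A c) := fun A c => rfl
  -- operator norm bound on Uᗮ
  have hop : ∀ v, v ∈ Uᗮ → ‖Matrix.toEuclideanLin P v‖ ≤ lam * ‖v‖ := by
    intro v hv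
    have h1 : (LinearMap.toContinuousLinearMap ((Matrix.toEuclideanLin P).domRestrict Uᗮ))
        ⟨v, hv⟩ = Matrix.toEuclideanLin P v := rfl
    have h2 := (LinearMap.toContinuousLinearMap
        ((Matrix.toEuclideanLin P).domRestrict Uᗮ)).le_opNorm (⟨v, hv⟩ : Uᗮ)
    rw [h1] at h2
    rw [hlam]
    exact h2
  -- membership facts
  have hXUmem : XU ∈ Mspace e := by
    rw [mem_Mspace_iff e he]
    intro c
    rw [hcolXU, ← hU]
    exact hQmem c
  have hPXUmem : P * XU ∈ Mspace e := by
    rw [mem_Mspace_iff e he]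
    intro c
    rw [hcolPA, hcolXU, ← hU]
    exact hinv _ (hQmem c)
  -- columns of differences
  have hcolsub : ∀ (A B : Matrix (Fin N) (Fin C) ℝ) c,
      colE (A - B) c = colE A c - colE B c := fun A B c => rfl
  -- step 1 : dM e (P*X) ≤ ‖P*X - P*XU‖
  have step1 : dM e (P * X) ≤ ‖P * X - P * XU‖ := by
    have := Metric.infDist_le_dist_of_mem (x := P * X) hPXUmem
    rwa [dist_eq_norm] at this
  -- step 2 : ‖P*X - P*XU‖ ≤ lam * ‖X - XU‖
  have step2 : ‖P * X - P * XU‖ ≤ lam * ‖X - XU‖ := by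
    rw [frobenius_norm_eq_cols, frobenius_norm_eq_cols]
    have hcol : ∀ c, colE (P * X - P * XU) c =
        Matrix.toEuclideanLin P (colE X c - Q c) := by
      intro c
      rw [hcolsub, hcolPA, hcolPA, hcolXU, ← map_sub]
    have hle : (∑ c, ‖colE (P * X - P * XU) c‖ ^ 2) ≤
        lam ^ 2 * ∑ c, ‖colE (X - XU) c‖ ^ 2 := by
      rw [Finset.mul_sum]
      refine Finset.sum_le_sum fun c _ => ?_
      rw [hcol c, hcolsub, hcolXU]
      have h1 := hop _ (hVmem c)
      calc ‖Matrix.toEuclideanLin P (colE X c - Q c)‖ ^ 2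
          ≤ (lam * ‖colE X c - Q c‖) ^ 2 := by
            apply pow_le_pow_left₀ (norm_nonneg _) h1
        _ = lam ^ 2 * ‖colE X c - Q c‖ ^ 2 := by ring
    calc Real.sqrt (∑ c, ‖colE (P * X - P * XU) c‖ ^ 2)
        ≤ Real.sqrt (lam ^ 2 * ∑ c, ‖colE (X - XU) c‖ ^ 2) := Real.sqrt_le_sqrt hle
      _ = lam * Real.sqrt (∑ c, ‖colE (X - XU) c‖ ^ 2) := by
          rw [Real.sqrt_mul (sq_nonneg lam), Real.sqrt_sq hlam0]
  -- step 3 : ‖X - XU‖ ≤ dM e X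
  have step3 : ‖X - XU‖ ≤ dM e X := by
    have hne : (Mspace e (C := C)).Nonempty := ⟨XU, hXUmem⟩
    rw [dM, Metric.infDist_eq_iInf]
    have : Nonempty (Mspace e (C := C)) := hne.to_subtype
    refine le_ciInf fun y => ?_
    rw [dist_eq_norm, frobenius_norm_eq_cols, frobenius_norm_eq_cols]
    apply Real.sqrt_le_sqrt
    refine Finset.sum_le_sum fun c _ => ?_
    have hyU : colE (y : Matrix (Fin N) (Fin C) ℝ) c ∈ U := by
      rw [hU]
      exact (mem_Mspace_iff e he _).mp y.2 c
    rw [hcolsub, hcolsub, hcolXU]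
    have hdecomp : colE X c - colE (y : Matrix (Fin N) (Fin C) ℝ) c =
        (colE X c - Q c) + (Q c - colE (y : Matrix (Fin N) (Fin C) ℝ) c) := by abel
    rw [hdecomp, norm_add_sq_real]
    have hinner : ⟪colE X c - Q c, Q c - colE (y : Matrix (Fin N) (Fin C) ℝ) c⟫ = 0 :=
      (Submodule.mem_orthogonal' _ _).mp (hVmem c) _
        (Submodule.sub_mem _ (hQmem c) hyU)
    rw [hinner]
    nlinarith [sq_nonneg ‖Q c - colE (y : Matrix (Fin N) (Fin C) ℝ) c‖]
  calc dM e (P * X) ≤ ‖P * X - P * XU‖ := step1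
    _ ≤ lam * ‖X - XU‖ := step2
    _ ≤ lam * dM e X := mul_le_mul_of_nonneg_left step3 hlam0
end
end

section
/- Let W ∈ ℝ^{C×C} have largest singular value s. Then for every X ∈ ℝ^{N×C}, d_𝓜(XW) ≤ s · d_𝓜(X). -/
open scoped Matrix

noncomputable section

attribute [local instance] Matrix.frobeniusNormedAddCommGroup

lemma frob_sq {N C : ℕ} (A : Matrix (Fin N) (Fin C) ℝ) :
    ‖A‖ ^ 2 = ∑ i, ∑ j, (A i j) ^ 2 := by
  rw [Matrix.frobenius_norm_def, ← Real.rpow_natCast _ 2, ← Real.rpow_mul (by positivity)]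
  norm_num

lemma eucl_sq {C : ℕ} (u : EuclideanSpace ℝ (Fin C)) : ‖u‖ ^ 2 = ∑ j, (u j) ^ 2 := by
  rw [EuclideanSpace.norm_eq, Real.sq_sqrt (by positivity)]
  simp [Real.norm_eq_abs, sq_abs]

lemma norm_mul_right_le {N C : ℕ} (W : Matrix (Fin C) (Fin C) ℝ)
    (A : Matrix (Fin N) (Fin C) ℝ) :
    ‖A * W‖ ≤ ‖LinearMap.toContinuousLinearMap (Matrix.toEuclideanLin W)‖ * ‖A‖ := by
  set s := ‖LinearMap.toContinuousLinearMap (Matrix.toEuclideanLin W)‖ with hs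
  have hs0 : 0 ≤ s := norm_nonneg _
  have hTnorm : ‖LinearMap.toContinuousLinearMap (Matrix.toEuclideanLin Wᵀ)‖ = s := by
    have h1 : Wᴴ = Wᵀ := by ext i j; simp
    rw [← h1, Matrix.toEuclideanLin_conjTranspose_eq_adjoint,
      LinearMap.adjoint_toContinuousLinearMap]
    exact (ContinuousLinearMap.adjoint : _ ≃ₗᵢ⋆[ℝ] _).norm_map _
  set T := LinearMap.toContinuousLinearMap (Matrix.toEuclideanLin Wᵀ) with hT
  have key : ∀ i : Fin N, ∑ j, ((A * W) i j) ^ 2 ≤ s ^ 2 * ∑ j, (A i j) ^ 2 := by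
    intro i
    have hrow : ∀ j, (A * W) i j =
        (T ((WithLp.equiv 2 (Fin C → ℝ)).symm (A i))) j := by
      intro j
      simp only [hT, LinearMap.coe_toContinuousLinearMap',
        Matrix.toEuclideanLin_apply_piLp_toLp]
      simp [Matrix.mul_apply, Matrix.mulVec, dotProduct, mul_comm]
    calc ∑ j, ((A * W) i j) ^ 2
        = ‖T ((WithLp.equiv 2 (Fin C → ℝ)).symm (A i))‖ ^ 2 := by
          rw [eucl_sq]; exact Finset.sum_congr rfl fun j _ => by rw [hrow j]
      _ ≤ (s * ‖(WithLp.equiv 2 (Fin C → ℝ)).symm (A i)‖) ^ 2 := by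
          apply pow_le_pow_left₀ (norm_nonneg _)
          rw [← hTnorm]; exact T.le_opNorm _
      _ = s ^ 2 * ∑ j, (A i j) ^ 2 := by
          rw [mul_pow, eucl_sq]; rfl
  have h2 : ‖A * W‖ ^ 2 ≤ (s * ‖A‖) ^ 2 := by
    rw [frob_sq, mul_pow, frob_sq, Finset.mul_sum]
    exact Finset.sum_le_sum fun i _ => key i
  have := Real.sqrt_le_sqrt h2
  rwa [Real.sqrt_sq (norm_nonneg _), Real.sqrt_sq (by positivity)] at this

lemma Mspace_nonempty {N C M : ℕ} (e : Fin M → EuclideanSpace ℝ (Fin N)) :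
    (Mspace e : Set (Matrix (Fin N) (Fin C) ℝ)).Nonempty :=
  ⟨0, 0, by ext i j; simp [Matrix.sum_apply, Matrix.vecMulVec_apply]⟩

lemma Mspace_mul_mem {N C M : ℕ} (e : Fin M → EuclideanSpace ℝ (Fin N))
    (W : Matrix (Fin C) (Fin C) ℝ) {Y : Matrix (Fin N) (Fin C) ℝ}
    (hY : Y ∈ Mspace e) : Y * W ∈ Mspace e := by
  obtain ⟨w, rfl⟩ := hY
  refine ⟨fun m => (w m) ᵥ* W, ?_⟩
  rw [Matrix.sum_mul]
  refine Finset.sum_congr rfl fun m _ => ?_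
  ext i j
  simp [Matrix.mul_apply, Matrix.vecMulVec_apply, Matrix.vecMul, dotProduct,
    Finset.mul_sum, mul_assoc]

/-- Let `W ∈ ℝ^{C×C}` have largest singular value `s` (the operator
`2`-norm of `W`).  If `(e 1, …, e M)` is an orthonormal family of entrywise non-negative
vectors in `ℝ^N`, then `d_𝓜(X W) ≤ s · d_𝓜(X)` for every `X ∈ ℝ^{N×C}`. -/
theorem dM_mul_right_le {N C M : ℕ} (hN : 0 < N) (hC : 0 < C) (hM : 0 < M) (hMN : M ≤ N)
    (e : Fin M → EuclideanSpace ℝ (Fin N)) (he : Orthonormal ℝ e)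
    (hnonneg : ∀ m i, 0 ≤ e m i)
    (W : Matrix (Fin C) (Fin C) ℝ) (s : ℝ)
    (hs : s = ‖LinearMap.toContinuousLinearMap (Matrix.toEuclideanLin W)‖)
    (X : Matrix (Fin N) (Fin C) ℝ) :
    dM e (X * W) ≤ s * dM e X := by
  have hs0 : 0 ≤ s := hs ▸ norm_nonneg _
  have hne : (Mspace e : Set (Matrix (Fin N) (Fin C) ℝ)).Nonempty := Mspace_nonempty e
  have : Nonempty (Mspace e : Set (Matrix (Fin N) (Fin C) ℝ)) := hne.to_subtype
  rw [dM, dM, Metric.infDist_eq_iInf (x := X), Real.mul_iInf_of_nonneg hs0]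
  refine le_ciInf fun y => ?_
  calc Metric.infDist (X * W) (Mspace e)
      ≤ dist (X * W) ((y : Matrix (Fin N) (Fin C) ℝ) * W) :=
        Metric.infDist_le_dist_of_mem (Mspace_mul_mem e W y.2)
    _ ≤ s * dist X y := by
        rw [dist_eq_norm, dist_eq_norm, ← Matrix.sub_mul, hs]
        exact norm_mul_right_le W _
end
end

section
/- For every X ∈ ℝ^{N×C}, d_𝓜(f(X)) ≤ s·λ · d_𝓜(X). -/
open scoped Matrix

noncomputable section

attribute [local instance] Matrix.frobeniusNormedAddCommGroup

/-- `mlp [W₁, …, W_H] Y = σ(⋯σ(σ(Y)W₁)W₂⋯W_H)` : a multi-layer perceptron with entrywise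
ReLU activations, applied row-wise to `Y ∈ ℝ^{N×C}`. -/
def mlp {N C : ℕ} (Ws : List (Matrix (Fin C) (Fin C) ℝ)) (Y : Matrix (Fin N) (Fin C) ℝ) :
    Matrix (Fin N) (Fin C) ℝ :=
  Ws.foldl (fun Z Wh => relu (Z * Wh)) (relu Y)

/-- The largest singular value of a square real matrix, i.e. the operator `2`-norm. -/
def maxSingularValue {C : ℕ} (W : Matrix (Fin C) (Fin C) ℝ) : ℝ :=
  ‖LinearMap.toContinuousLinearMap (Matrix.toEuclideanLin W)‖

namespace DMaux

variable {N M : ℕ} (e : Fin M → EuclideanSpace ℝ (Fin N))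

def coefA (x : Fin N → ℝ) (m : Fin M) : ℝ := ∑ i, e m i * x i

def qres (x : Fin N → ℝ) : Fin N → ℝ := fun i => x i - ∑ m, coefA e x m * e m i

theorem herm (he : Orthonormal ℝ e) (m k : Fin M) :
    (∑ i, e m i * e k i) = if m = k then (1:ℝ) else 0 := by
  have h := orthonormal_iff_ite.mp he m k
  simpa [PiLp.inner_apply, RCLike.inner_apply, conj_trivial, mul_comm] using h

theorem combo_sq (he : Orthonormal ℝ e) (b : Fin M → ℝ) :
    ∑ i, (∑ m, b m * e m i)^2 = ∑ m, (b m)^2 := by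
  have h : ∀ i : Fin N, (∑ m, b m * e m i)^2 = ∑ m, ∑ k, b m * b k * (e m i * e k i) := by
    intro i
    rw [sq, Finset.sum_mul_sum]
    apply Finset.sum_congr rfl; intro m _
    apply Finset.sum_congr rfl; intro k _
    ring
  simp_rw [h]
  rw [Finset.sum_comm]
  have h2 : ∀ m : Fin M, ∑ i, ∑ k, b m * b k * (e m i * e k i) = (b m)^2 := by
    intro m
    rw [Finset.sum_comm]
    have h3 : ∀ k : Fin M, ∑ i, b m * b k * (e m i * e k i)
        = b m * b k * (if m = k then 1 else 0) := by
      intro k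
      rw [← Finset.mul_sum, herm e he]
    simp_rw [h3]
    simp [sq]
  simp_rw [h2]

theorem coefA_qres (he : Orthonormal ℝ e) (x : Fin N → ℝ) (m : Fin M) :
    coefA e (qres e x) m = 0 := by
  unfold coefA qres
  simp_rw [mul_sub, Finset.sum_sub_distrib]
  have h1 : ∑ i, e m i * ∑ k, coefA e x k * e k i = ∑ k, coefA e x k * ∑ i, e m i * e k i := by
    simp_rw [Finset.mul_sum]
    rw [Finset.sum_comm]
    apply Finset.sum_congr rfl; intro k _
    apply Finset.sum_congr rfl; intro i _
    ring
  rw [h1]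
  simp_rw [herm e he]
  simp [coefA]

theorem cross (he : Orthonormal ℝ e) (x : Fin N → ℝ) (b : Fin M → ℝ) :
    ∑ i, qres e x i * (∑ m, b m * e m i) = 0 := by
  have h1 : ∑ i, qres e x i * (∑ m, b m * e m i)
      = ∑ m, b m * coefA e (qres e x) m := by
    simp_rw [Finset.mul_sum]
    rw [Finset.sum_comm]
    apply Finset.sum_congr rfl; intro k _
    rw [coefA, Finset.mul_sum]
    apply Finset.sum_congr rfl; intro i _
    ring
  rw [h1]
  simp [coefA_qres e he]

theorem pyth (he : Orthonormal ℝ e) (x : Fin N → ℝ) (b : Fin M → ℝ) :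
    ∑ i, (qres e x i + ∑ m, b m * e m i)^2
      = (∑ i, (qres e x i)^2) + ∑ m, (b m)^2 := by
  have h : ∀ i : Fin N, (qres e x i + ∑ m, b m * e m i)^2
      = (qres e x i)^2 + 2 * (qres e x i * (∑ m, b m * e m i)) + (∑ m, b m * e m i)^2 := by
    intro i; ring
  simp_rw [h]
  rw [Finset.sum_add_distrib, Finset.sum_add_distrib, ← Finset.mul_sum,
    cross e he, combo_sq e he]
  ring

theorem orth (he : Orthonormal ℝ e) (x : Fin N → ℝ) :
    ∑ i, (x i)^2 = (∑ i, (qres e x i)^2) + ∑ m, (coefA e x m)^2 := by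
  have h : ∀ i : Fin N, x i = qres e x i + ∑ m, coefA e x m * e m i := by
    intro i; simp [qres]
  calc ∑ i, (x i)^2 = ∑ i, (qres e x i + ∑ m, coefA e x m * e m i)^2 := by
        apply Finset.sum_congr rfl; intro i _; rw [← h]
    _ = _ := pyth e he x _

theorem bessel (he : Orthonormal ℝ e) (x : Fin N → ℝ) :
    ∑ m, (coefA e x m)^2 ≤ ∑ i, (x i)^2 := by
  rw [orth e he x]
  have : (0:ℝ) ≤ ∑ i, (qres e x i)^2 := Finset.sum_nonneg fun i _ => sq_nonneg _
  linarith

theorem qres_relu (he : Orthonormal ℝ e) (hnonneg : ∀ m i, 0 ≤ e m i) (x : Fin N → ℝ) :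
    ∑ i, (qres e (fun i => max (x i) 0) i)^2 ≤ ∑ i, (qres e x i)^2 := by
  set p : Fin N → ℝ := fun i => max (x i) 0 with hp
  set q : Fin N → ℝ := fun i => max (-x i) 0 with hq
  have hpq : ∀ i, x i = p i - q i := by
    intro i
    rcases le_total (x i) 0 with h | h
    · simp [hp, hq, max_eq_right h, max_eq_left (neg_nonneg.mpr h)]
    · simp [hp, hq, max_eq_left h, max_eq_right (neg_nonpos.mpr h)]
  have hmul : ∀ i, p i * q i = 0 := by
    intro i
    rcases le_total (x i) 0 with h | h
    · simp [hp, max_eq_right h]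
    · simp [hq, max_eq_right (neg_nonpos.mpr h)]
  have hS : ∑ i, (x i)^2 = ∑ i, (p i)^2 + ∑ i, (q i)^2 := by
    rw [← Finset.sum_add_distrib]
    apply Finset.sum_congr rfl; intro i _
    have := hmul i
    rw [hpq i]; ring_nf; nlinarith [hmul i]
  have hcoef : ∀ m, coefA e x m = coefA e p m - coefA e q m := by
    intro m
    simp only [coefA]
    rw [← Finset.sum_sub_distrib]
    apply Finset.sum_congr rfl; intro i _
    rw [hpq i]; ring
  have hop : orth e he p = orth e he p := rfl
  have op := orth e he p
  have ox := orth e he x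
  have hbq := bessel e he q
  have hcnn : ∀ m, 0 ≤ coefA e p m ∧ 0 ≤ coefA e q m := by
    intro m
    constructor <;> exact Finset.sum_nonneg fun i _ => by
      first
      | exact mul_nonneg (hnonneg m i) (le_max_right _ _)
  have key : ∑ m, (coefA e x m)^2 ≤ (∑ i, (q i)^2) + ∑ m, (coefA e p m)^2 := by
    have expand : ∀ m, (coefA e x m)^2
        = (coefA e p m)^2 - 2 * (coefA e p m * coefA e q m) + (coefA e q m)^2 := by
      intro m; rw [hcoef m]; ring
    simp_rw [expand]
    rw [Finset.sum_add_distrib, Finset.sum_sub_distrib]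
    have h2 : (0:ℝ) ≤ ∑ m, 2 * (coefA e p m * coefA e q m) :=
      Finset.sum_nonneg fun m _ => by
        obtain ⟨ha, hb⟩ := hcnn m
        positivity
    linarith
  have target : ∑ i, (qres e p i)^2 ≤ ∑ i, (qres e x i)^2 := by
    have e1 : ∑ i, (qres e p i)^2 = ∑ i, (p i)^2 - ∑ m, (coefA e p m)^2 := by
      rw [op]; ring
    have e2 : ∑ i, (qres e x i)^2 = ∑ i, (x i)^2 - ∑ m, (coefA e x m)^2 := by
      rw [ox]; ring
    rw [e1, e2, hS]
    linarith
  exact target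

/-- embed a plain function into EuclideanSpace -/
def toE {k : ℕ} (x : Fin k → ℝ) : EuclideanSpace ℝ (Fin k) := (WithLp.equiv 2 (Fin k → ℝ)).symm x

theorem normE_sq {k : ℕ} (x : Fin k → ℝ) : ‖toE x‖^2 = ∑ i, (x i)^2 := by
  rw [toE, EuclideanSpace.norm_eq, Real.sq_sqrt (Finset.sum_nonneg fun i _ => sq_nonneg _)]
  simp [sq_abs]

theorem inner_toE {k : ℕ} (x : EuclideanSpace ℝ (Fin k)) (y : Fin k → ℝ) :
    (inner ℝ x (toE y) : ℝ) = ∑ i, x i * y i := by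
  simp [toE, PiLp.inner_apply, RCLike.inner_apply, mul_comm]

theorem sumE_apply {k : ℕ} {α : Type*} (s : Finset α) (f : α → EuclideanSpace ℝ (Fin k)) (i : Fin k) :
    (∑ a ∈ s, f a) i = ∑ a ∈ s, f a i := by
  induction s using Finset.cons_induction with
  | empty => rfl
  | cons a s ha ih => rw [Finset.sum_cons, Finset.sum_cons, ← ih]; rfl

theorem coefA_add (x y : Fin N → ℝ) (m : Fin M) :
    coefA e (x + y) m = coefA e x m + coefA e y m := by
  simp [coefA, mul_add, Finset.sum_add_distrib]

theorem qres_add (x y : Fin N → ℝ) :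
    qres e (x + y) = qres e x + qres e y := by
  funext i
  simp only [qres, coefA_add, Pi.add_apply, add_mul, Finset.sum_add_distrib]
  ring

theorem qres_mem_perp (he : Orthonormal ℝ e) (x : Fin N → ℝ) :
    toE (qres e x) ∈ (Submodule.span ℝ (Set.range e))ᗮ := by
  rw [Submodule.mem_orthogonal _ _]
  intro u hu
  induction hu using Submodule.span_induction with
  | mem v hv =>
      obtain ⟨m, rfl⟩ := hv
      rw [inner_toE]
      exact coefA_qres e he x m
  | zero => simp
  | add u v _ _ h1 h2 => rw [inner_add_left, h1, h2]; ring
  | smul c u _ h1 => rw [inner_smul_left, h1]; simp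

theorem qres_of_mem (he : Orthonormal ℝ e) (u : Fin N → ℝ)
    (hu : toE u ∈ Submodule.span ℝ (Set.range e)) : qres e u = 0 := by
  obtain ⟨c, hc⟩ := Submodule.mem_span_range_iff_exists_fun ℝ |>.mp hu
  have hui : ∀ i, u i = ∑ m, c m * e m i := by
    intro i
    have h := congrArg (fun v : EuclideanSpace ℝ (Fin N) => v i) hc
    rw [sumE_apply] at h
    exact h.symm
  have hcoef : ∀ m, coefA e u m = c m := by
    intro m
    have h1 : coefA e u m = ∑ i, ∑ k, c k * (e m i * e k i) := by
      simp only [coefA]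
      apply Finset.sum_congr rfl; intro i _
      rw [hui i, Finset.mul_sum]
      apply Finset.sum_congr rfl; intro k _
      ring
    have h2 : ∑ i, ∑ k, c k * (e m i * e k i) = ∑ k, c k * ∑ i, e m i * e k i := by
      rw [Finset.sum_comm]
      apply Finset.sum_congr rfl; intro k _
      rw [Finset.mul_sum]
    rw [h1, h2]
    simp_rw [herm e he]
    simp
  funext i
  simp only [qres, hcoef, Pi.zero_apply]
  rw [← hui i]
  ring

theorem qres_of_perp (u : Fin N → ℝ)
    (hu : toE u ∈ (Submodule.span ℝ (Set.range e))ᗮ) : qres e u = u := by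
  have hc : ∀ m, coefA e u m = 0 := by
    intro m
    have h := (Submodule.mem_orthogonal _ _).mp hu (e m)
      (Submodule.subset_span (Set.mem_range_self m))
    rw [inner_toE] at h
    exact h
  funext i
  simp [qres, hc]

section Pstuff

variable {P : Matrix (Fin N) (Fin N) ℝ} {U : Submodule ℝ (EuclideanSpace ℝ (Fin N))}

theorem inner_mulVec_symm (hP : P.IsSymm) (u v : Fin N → ℝ) :
    ∑ i, u i * (P.mulVec v) i = ∑ j, (P.mulVec u) j * v j := by
  simp only [Matrix.mulVec, dotProduct]
  have h1 : ∀ i : Fin N, u i * ∑ j, P i j * v j = ∑ j, P i j * u i * v j := by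
    intro i
    rw [Finset.mul_sum]
    apply Finset.sum_congr rfl; intro j _; ring
  have h2 : ∀ j : Fin N, (∑ i, P j i * u i) * v j = ∑ i, P i j * u i * v j := by
    intro j
    rw [Finset.sum_mul]
    apply Finset.sum_congr rfl; intro i _
    rw [hP.apply i j]
  simp_rw [h1, h2]
  exact Finset.sum_comm

theorem perp_invariant (hP : P.IsSymm)
    (hinv : ∀ u ∈ U, (WithLp.toLp 2 (P.mulVec u) : EuclideanSpace ℝ (Fin N)) ∈ U)
    (v : Fin N → ℝ) (hv : toE v ∈ Uᗮ) : toE (P.mulVec v) ∈ Uᗮ := by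
  rw [Submodule.mem_orthogonal _ _]
  intro u hu
  have h1 : (inner ℝ u (toE (P.mulVec v)) : ℝ) = ∑ i, u i * (P.mulVec v) i := inner_toE _ _
  have h2 : (inner ℝ (toE (P.mulVec u)) (toE v) : ℝ)
      = ∑ j, (P.mulVec u) j * v j := inner_toE _ _
  rw [h1, inner_mulVec_symm hP, ← h2]
  exact (Submodule.mem_orthogonal _ _).mp hv _ (hinv u hu)

theorem qres_P (he : Orthonormal ℝ e)
    (hU : U = Submodule.span ℝ (Set.range e)) (hP : P.IsSymm)
    (hinv : ∀ u ∈ U, (WithLp.toLp 2 (P.mulVec u) : EuclideanSpace ℝ (Fin N)) ∈ U)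
    (x : Fin N → ℝ) :
    qres e (P.mulVec x) = P.mulVec (qres e x) := by
  set pr : Fin N → ℝ := fun i => ∑ m, coefA e x m * e m i with hpr
  have hx : x = pr + qres e x := by funext i; simp [qres, hpr]
  have hprU : toE pr ∈ U := by
    rw [hU]
    have : toE pr = ∑ m, coefA e x m • e m := by
      ext i
      rw [sumE_apply]
      rfl
    rw [this]
    exact Submodule.sum_mem _ fun m _ =>
      Submodule.smul_mem _ _ (Submodule.subset_span (Set.mem_range_self m))
  have hq : toE (qres e x) ∈ Uᗮ := by rw [hU]; exact qres_mem_perp e he x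
  have hsplit : P.mulVec x = P.mulVec pr + P.mulVec (qres e x) := by
    conv_lhs => rw [hx]
    rw [Matrix.mulVec_add]
  rw [hsplit, qres_add]
  have h1 : qres e (P.mulVec pr) = 0 := by
    apply qres_of_mem e he
    have := hinv _ hprU
    rwa [hU] at this
  have h2 : qres e (P.mulVec (qres e x)) = P.mulVec (qres e x) := by
    apply qres_of_perp e
    rw [← hU]
    exact perp_invariant hP hinv _ hq
  rw [h1, h2]
  simp

set_option maxHeartbeats 1000000 in
set_option synthInstance.maxHeartbeats 400000 in
theorem qres_P_bound (he : Orthonormal ℝ e)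
    (hU : U = Submodule.span ℝ (Set.range e)) (hP : P.IsSymm)
    (hinv : ∀ u ∈ U, (WithLp.toLp 2 (P.mulVec u) : EuclideanSpace ℝ (Fin N)) ∈ U)
    (lam : ℝ)
    (hlam : lam = ‖LinearMap.toContinuousLinearMap ((Matrix.toEuclideanLin P).domRestrict Uᗮ)‖)
    (x : Fin N → ℝ) :
    ∑ i, (qres e (P.mulVec x) i)^2 ≤ lam^2 * ∑ i, (qres e x i)^2 := by
  have hq : toE (qres e x) ∈ Uᗮ := by rw [hU]; exact qres_mem_perp e he x
  set L := LinearMap.toContinuousLinearMap ((Matrix.toEuclideanLin P).domRestrict Uᗮ) with hL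
  set z : ↥Uᗮ := ⟨toE (qres e x), hq⟩ with hz
  have happ : L z = toE (P.mulVec (qres e x)) := by
    rw [hL]
    simp only [LinearMap.coe_toContinuousLinearMap', LinearMap.domRestrict_apply]
    exact Matrix.toEuclideanLin_apply_piLp_toLp P _
  have hnle : ‖toE (P.mulVec (qres e x))‖ ≤ lam * ‖toE (qres e x)‖ := by
    rw [← happ, hlam]
    calc ‖L z‖ ≤ ‖L‖ * ‖z‖ := L.le_opNorm z
      _ = ‖L‖ * ‖toE (qres e x)‖ := by rw [Submodule.coe_norm]
  have hnn : (0:ℝ) ≤ ‖toE (qres e x)‖ := norm_nonneg _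
  have hlamnn : 0 ≤ lam := by rw [hlam]; exact ContinuousLinearMap.opNorm_nonneg _
  calc ∑ i, (qres e (P.mulVec x) i)^2 = ‖toE (qres e (P.mulVec x))‖^2 := (normE_sq _).symm
    _ = ‖toE (P.mulVec (qres e x))‖^2 := by rw [qres_P e he hU hP hinv]
    _ ≤ (lam * ‖toE (qres e x)‖)^2 := by
        apply sq_le_sq' <;> nlinarith [norm_nonneg (toE (P.mulVec (qres e x)))]
    _ = lam^2 * ‖toE (qres e x)‖^2 := by ring
    _ = lam^2 * ∑ i, (qres e x i)^2 := by rw [normE_sq]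

end Pstuff

section MatrixLevel

variable {C : ℕ}

def SQ (X : Matrix (Fin N) (Fin C) ℝ) : ℝ := ∑ n, ∑ c, (X n c)^2

theorem SQ_nonneg (X : Matrix (Fin N) (Fin C) ℝ) : 0 ≤ SQ X :=
  Finset.sum_nonneg fun _ _ => Finset.sum_nonneg fun _ _ => sq_nonneg _

theorem SQ_comm (X : Matrix (Fin N) (Fin C) ℝ) : SQ X = ∑ c, ∑ n, (X n c)^2 :=
  Finset.sum_comm

theorem frob_eq (X : Matrix (Fin N) (Fin C) ℝ) : ‖X‖ = Real.sqrt (SQ X) := by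
  rw [Matrix.frobenius_norm_def, Real.sqrt_eq_rpow]
  congr 1
  apply Finset.sum_congr rfl; intro n _
  apply Finset.sum_congr rfl; intro c _
  rw [show ((2:ℝ)) = ((2:ℕ):ℝ) by norm_num, Real.rpow_natCast]
  rw [Real.norm_eq_abs, sq_abs]

theorem sqrt_le_scale {u v K : ℝ} (hK : 0 ≤ K) (h : u ≤ K^2 * v) :
    Real.sqrt u ≤ K * Real.sqrt v := by
  calc Real.sqrt u ≤ Real.sqrt (K^2 * v) := Real.sqrt_le_sqrt h
    _ = Real.sqrt (K^2) * Real.sqrt v := Real.sqrt_mul (sq_nonneg K) v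
    _ = K * Real.sqrt v := by rw [Real.sqrt_sq hK]

theorem vecMul_sq_bound (W : Matrix (Fin C) (Fin C) ℝ) (x : Fin C → ℝ) :
    ∑ c, (∑ j, x j * W j c)^2 ≤ (maxSingularValue W)^2 * ∑ j, (x j)^2 := by
  have hy : (fun c => ∑ j, x j * W j c) = Wᵀ.mulVec x := by
    funext c
    simp [Matrix.mulVec, dotProduct, Matrix.transpose_apply, mul_comm]
  have happ : Matrix.toEuclideanLin Wᵀ (toE x) = toE (Wᵀ.mulVec x) :=
    Matrix.toEuclideanLin_apply_piLp_toLp Wᵀ x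
  have hmsv : maxSingularValue Wᵀ = maxSingularValue W := by
    have h1 : Wᵀ = Wᴴ := by
      ext i j; simp [Matrix.conjTranspose_apply]
    rw [maxSingularValue, h1, Matrix.toEuclideanLin_conjTranspose_eq_adjoint,
      LinearMap.adjoint_toContinuousLinearMap]
    exact LinearIsometryEquiv.norm_map ContinuousLinearMap.adjoint _
  have hle : ‖toE (Wᵀ.mulVec x)‖ ≤ maxSingularValue W * ‖toE x‖ := by
    rw [← happ, ← hmsv, maxSingularValue]
    calc ‖Matrix.toEuclideanLin Wᵀ (toE x)‖
        = ‖LinearMap.toContinuousLinearMap (Matrix.toEuclideanLin Wᵀ) (toE x)‖ := by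
          rw [LinearMap.coe_toContinuousLinearMap']
      _ ≤ _ := ContinuousLinearMap.le_opNorm _ _
  have hnn : 0 ≤ maxSingularValue W := ContinuousLinearMap.opNorm_nonneg _
  calc ∑ c, (∑ j, x j * W j c)^2 = ∑ c, ((Wᵀ.mulVec x) c)^2 := by
        apply Finset.sum_congr rfl; intro c _
        rw [congrFun hy c]
    _ = ‖toE (Wᵀ.mulVec x)‖^2 := (normE_sq _).symm
    _ ≤ (maxSingularValue W * ‖toE x‖)^2 := by
        apply sq_le_sq' <;> nlinarith [norm_nonneg (toE (Wᵀ.mulVec x))]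
    _ = (maxSingularValue W)^2 * ‖toE x‖^2 := by ring
    _ = _ := by rw [normE_sq]

theorem SQ_mul_le (A : Matrix (Fin N) (Fin C) ℝ) (W : Matrix (Fin C) (Fin C) ℝ) :
    SQ (A * W) ≤ (maxSingularValue W)^2 * SQ A := by
  rw [SQ, SQ, Finset.mul_sum]
  apply Finset.sum_le_sum
  intro n _
  have h : ∀ c, (A * W) n c = ∑ j, A n j * W j c := fun c => Matrix.mul_apply
  simp_rw [h]
  exact vecMul_sq_bound W (A n)

/-- columnwise residual -/
def resM (X : Matrix (Fin N) (Fin C) ℝ) : Matrix (Fin N) (Fin C) ℝ :=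
  Matrix.of fun n c => qres e (fun i => X i c) n

theorem qres_lincomb {k : ℕ} (g : Fin k → ℝ) (z : Fin k → Fin N → ℝ) :
    qres e (fun i => ∑ j, g j * z j i) = fun i => ∑ j, g j * qres e (z j) i := by
  have hc : ∀ m, coefA e (fun i => ∑ j, g j * z j i) m = ∑ j, g j * coefA e (z j) m := by
    intro m
    simp only [coefA]
    have h1 : ∀ i : Fin N, e m i * ∑ j, g j * z j i = ∑ j, g j * (e m i * z j i) := by
      intro i
      rw [Finset.mul_sum]
      apply Finset.sum_congr rfl; intro j _; ring
    simp_rw [h1]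
    rw [Finset.sum_comm]
    apply Finset.sum_congr rfl; intro j _
    rw [Finset.mul_sum]
  funext i
  simp only [qres, hc]
  have h2 : ∑ m, (∑ j, g j * coefA e (z j) m) * e m i
      = ∑ j, g j * ∑ m, coefA e (z j) m * e m i := by
    simp_rw [Finset.sum_mul]
    rw [Finset.sum_comm]
    apply Finset.sum_congr rfl; intro j _
    rw [Finset.mul_sum]
    apply Finset.sum_congr rfl; intro m _; ring
  rw [h2, ← Finset.sum_sub_distrib]
  apply Finset.sum_congr rfl; intro j _
  ring

theorem resM_mul (Z : Matrix (Fin N) (Fin C) ℝ) (W : Matrix (Fin C) (Fin C) ℝ) :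
    resM e (Z * W) = resM e Z * W := by
  ext n c
  have hcol : (fun i => (Z * W) i c) = fun i => ∑ j, W j c * Z i j := by
    funext i
    rw [Matrix.mul_apply]
    apply Finset.sum_congr rfl; intro j _; ring
  have h := qres_lincomb e (fun j => W j c) (fun j i => Z i j)
  calc (resM e (Z * W)) n c = qres e (fun i => (Z * W) i c) n := rfl
    _ = ∑ j, W j c * qres e (fun i => Z i j) n := by rw [hcol, h]
    _ = (resM e Z * W) n c := by
        rw [Matrix.mul_apply]
        apply Finset.sum_congr rfl; intro j _
        rw [mul_comm]
        rfl

theorem SQ_resM_relu (he : Orthonormal ℝ e) (hnonneg : ∀ m i, 0 ≤ e m i)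
    (Z : Matrix (Fin N) (Fin C) ℝ) :
    SQ (resM e (relu Z)) ≤ SQ (resM e Z) := by
  rw [SQ_comm, SQ_comm]
  apply Finset.sum_le_sum
  intro c _
  have h := qres_relu e he hnonneg (fun i => Z i c)
  calc ∑ n, ((resM e (relu Z)) n c)^2
      = ∑ n, (qres e (fun i => max (Z i c) 0) n)^2 := by
        apply Finset.sum_congr rfl; intro n _; rfl
    _ ≤ ∑ n, (qres e (fun i => Z i c) n)^2 := h
    _ = ∑ n, ((resM e Z) n c)^2 := by
        apply Finset.sum_congr rfl; intro n _; rfl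

theorem SQ_resM_P {P : Matrix (Fin N) (Fin N) ℝ} {U : Submodule ℝ (EuclideanSpace ℝ (Fin N))}
    (he : Orthonormal ℝ e)
    (hU : U = Submodule.span ℝ (Set.range e)) (hP : P.IsSymm)
    (hinv : ∀ u ∈ U, (WithLp.toLp 2 (P.mulVec u) : EuclideanSpace ℝ (Fin N)) ∈ U)
    (lam : ℝ)
    (hlam : lam = ‖LinearMap.toContinuousLinearMap ((Matrix.toEuclideanLin P).domRestrict Uᗮ)‖)
    (X : Matrix (Fin N) (Fin C) ℝ) :
    SQ (resM e (P * X)) ≤ lam^2 * SQ (resM e X) := by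
  rw [SQ_comm, SQ_comm, Finset.mul_sum]
  apply Finset.sum_le_sum
  intro c _
  have h := qres_P_bound e he hU hP hinv lam hlam (fun i => X i c)
  have hcol : (fun i => (P * X) i c) = P.mulVec (fun i => X i c) := by
    funext i
    rw [Matrix.mul_apply]
    rfl
  calc ∑ n, ((resM e (P * X)) n c)^2
      = ∑ n, (qres e (P.mulVec (fun i => X i c)) n)^2 := by
        apply Finset.sum_congr rfl; intro n _
        show (qres e (fun i => (P * X) i c) n)^2 = _
        rw [hcol]
    _ ≤ lam^2 * ∑ n, (qres e (fun i => X i c) n)^2 := h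
    _ = lam^2 * ∑ n, ((resM e X) n c)^2 := rfl

theorem Mspace_nonempty : (Mspace e (C := C)).Nonempty := by
  refine ⟨0, 0, ?_⟩
  ext n c
  simp [Matrix.sum_apply, Matrix.vecMulVec_apply]

theorem proj_mem (X : Matrix (Fin N) (Fin C) ℝ) : X - resM e X ∈ Mspace e := by
  refine ⟨fun m c => coefA e (fun i => X i c) m, ?_⟩
  ext n c
  rw [Matrix.sum_apply]
  simp only [Matrix.vecMulVec_apply, Matrix.sub_apply]
  show X n c - qres e (fun i => X i c) n = _
  simp only [qres]
  rw [sub_sub_cancel]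
  apply Finset.sum_congr rfl; intro m _
  ring

theorem dM_eq (he : Orthonormal ℝ e) (X : Matrix (Fin N) (Fin C) ℝ) :
    dM e X = Real.sqrt (SQ (resM e X)) := by
  apply le_antisymm
  · calc dM e X ≤ dist X (X - resM e X) := Metric.infDist_le_dist_of_mem (proj_mem e X)
      _ = ‖X - (X - resM e X)‖ := dist_eq_norm _ _
      _ = ‖resM e X‖ := by rw [sub_sub_cancel]
      _ = Real.sqrt (SQ (resM e X)) := frob_eq _
  · rw [dM, Metric.infDist_eq_iInf]
    haveI : Nonempty ↥(Mspace e (C := C)) := (Mspace_nonempty e).to_subtype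
    apply le_ciInf
    rintro ⟨Y, w, hY⟩
    subst hY
    rw [Subtype.coe_mk (p := (· ∈ Mspace e)) (h := ⟨w, rfl⟩), dist_eq_norm, frob_eq]
    apply Real.sqrt_le_sqrt
    rw [SQ_comm, SQ_comm]
    apply Finset.sum_le_sum
    intro c _
    have hcol : ∀ n, (X - ∑ m, Matrix.vecMulVec (e m) (w m)) n c
        = qres e (fun i => X i c) n + ∑ m, (coefA e (fun i => X i c) m - w m c) * e m n := by
      intro n
      rw [Matrix.sub_apply, Matrix.sum_apply]
      simp only [Matrix.vecMulVec_apply, qres]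
      have hh : ∑ m, (coefA e (fun i => X i c) m - w m c) * e m n
          = ∑ m, coefA e (fun i => X i c) m * e m n - ∑ m, e m n * w m c := by
        rw [← Finset.sum_sub_distrib]
        apply Finset.sum_congr rfl; intro m _; ring
      rw [hh]
      ring
    calc ∑ n, ((resM e X) n c)^2
        ≤ (∑ n, (qres e (fun i => X i c) n)^2)
          + ∑ m, (coefA e (fun i => X i c) m - w m c)^2 := by
          have h0 : (0:ℝ) ≤ ∑ m, (coefA e (fun i => X i c) m - w m c)^2 :=
            Finset.sum_nonneg fun m _ => sq_nonneg _
          have : ∑ n, ((resM e X) n c)^2 = ∑ n, (qres e (fun i => X i c) n)^2 := rfl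
          linarith
      _ = ∑ n, ((X - ∑ m, Matrix.vecMulVec (e m) (w m)) n c)^2 := by
          rw [← pyth e he (fun i => X i c) (fun m => coefA e (fun i => X i c) m - w m c)]
          apply Finset.sum_congr rfl; intro n _
          rw [hcol n]

theorem fold_bound (he : Orthonormal ℝ e) (hnonneg : ∀ m i, 0 ≤ e m i)
    (Ws : List (Matrix (Fin C) (Fin C) ℝ)) :
    ∀ Z : Matrix (Fin N) (Fin C) ℝ,
    Real.sqrt (SQ (resM e (Ws.foldl (fun Z Wh => relu (Z * Wh)) Z)))
      ≤ (Ws.map maxSingularValue).prod * Real.sqrt (SQ (resM e Z)) := by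
  induction Ws with
  | nil => intro Z; simp
  | cons W Ws ih =>
    intro Z
    have hprod : (0:ℝ) ≤ (Ws.map maxSingularValue).prod := by
      apply List.prod_nonneg
      intro a ha
      obtain ⟨W', _, rfl⟩ := List.mem_map.mp ha
      exact ContinuousLinearMap.opNorm_nonneg _
    have hmsv : 0 ≤ maxSingularValue W := ContinuousLinearMap.opNorm_nonneg _
    simp only [List.foldl_cons, List.map_cons, List.prod_cons]
    calc Real.sqrt (SQ (resM e (Ws.foldl (fun Z Wh => relu (Z * Wh)) (relu (Z * W)))))
        ≤ (Ws.map maxSingularValue).prod * Real.sqrt (SQ (resM e (relu (Z * W)))) := ih _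
      _ ≤ (Ws.map maxSingularValue).prod * Real.sqrt (SQ (resM e (Z * W))) := by
          apply mul_le_mul_of_nonneg_left _ hprod
          exact Real.sqrt_le_sqrt (SQ_resM_relu e he hnonneg _)
      _ ≤ (Ws.map maxSingularValue).prod
            * (maxSingularValue W * Real.sqrt (SQ (resM e Z))) := by
          apply mul_le_mul_of_nonneg_left _ hprod
          apply sqrt_le_scale hmsv
          rw [resM_mul]
          exact SQ_mul_le _ _
      _ = maxSingularValue W * (Ws.map maxSingularValue).prod
            * Real.sqrt (SQ (resM e Z)) := by ring

end MatrixLevel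
end DMaux

/-- **Theorem 1 of the paper.** Let `P ∈ ℝ^{N×N}` be symmetric,
`U = span(e 1, …, e M)` an `M`-dimensional subspace with an orthonormal basis of entrywise
non-negative vectors, invariant under `P`, and let `lam` be the operator norm of the
restriction of `P` to `Uᗮ`.  Let `f(X) = σ(⋯σ(σ(P X)W₁)W₂⋯W_H)` with `H ≥ 1` weight
matrices, and let `s` be the product of their largest singular values.  Then
`d_𝓜(f(X)) ≤ s·lam·d_𝓜(X)` for every `X ∈ ℝ^{N×C}`. -/
theorem dM_layer_le {N C M H : ℕ} (hN : 0 < N) (hC : 0 < C) (hM : 0 < M) (hMN : M ≤ N)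
    (hH : 0 < H)
    (P : Matrix (Fin N) (Fin N) ℝ) (hP : P.IsSymm)
    (e : Fin M → EuclideanSpace ℝ (Fin N)) (he : Orthonormal ℝ e)
    (hnonneg : ∀ m i, 0 ≤ e m i)
    (U : Submodule ℝ (EuclideanSpace ℝ (Fin N)))
    (hU : U = Submodule.span ℝ (Set.range e))
    (hinv : ∀ u ∈ U, (WithLp.toLp 2 (P.mulVec u) : EuclideanSpace ℝ (Fin N)) ∈ U)
    (lam : ℝ)
    (hlam : lam = ‖LinearMap.toContinuousLinearMap ((Matrix.toEuclideanLin P).domRestrict Uᗮ)‖)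
    (Ws : List (Matrix (Fin C) (Fin C) ℝ)) (hWs : Ws.length = H)
    (s : ℝ) (hs : s = (Ws.map maxSingularValue).prod)
    (X : Matrix (Fin N) (Fin C) ℝ) :
    dM e (mlp Ws (P * X)) ≤ s * lam * dM e X := by
  classical
  have hlamnn : 0 ≤ lam := by
    rw [hlam]; exact ContinuousLinearMap.opNorm_nonneg _
  have hsnn : 0 ≤ s := by
    rw [hs]
    apply List.prod_nonneg
    intro a ha
    obtain ⟨W', _, rfl⟩ := List.mem_map.mp ha
    exact ContinuousLinearMap.opNorm_nonneg _
  rw [DMaux.dM_eq e he, DMaux.dM_eq e he]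
  have h1 := DMaux.fold_bound e he hnonneg Ws (relu (P * X))
  have h2 : Real.sqrt (DMaux.SQ (DMaux.resM e (relu (P * X))))
      ≤ Real.sqrt (DMaux.SQ (DMaux.resM e (P * X))) :=
    Real.sqrt_le_sqrt (DMaux.SQ_resM_relu e he hnonneg _)
  have h3 : Real.sqrt (DMaux.SQ (DMaux.resM e (P * X)))
      ≤ lam * Real.sqrt (DMaux.SQ (DMaux.resM e X)) :=
    DMaux.sqrt_le_scale hlamnn (DMaux.SQ_resM_P e he hU hP hinv lam hlam X)
  calc Real.sqrt (DMaux.SQ (DMaux.resM e (mlp Ws (P * X))))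
      ≤ (Ws.map maxSingularValue).prod
          * Real.sqrt (DMaux.SQ (DMaux.resM e (relu (P * X)))) := h1
    _ ≤ (Ws.map maxSingularValue).prod
          * (lam * Real.sqrt (DMaux.SQ (DMaux.resM e X))) := by
        apply mul_le_mul_of_nonneg_left _ (hs ▸ hsnn)
        exact le_trans h2 h3
    _ = s * lam * Real.sqrt (DMaux.SQ (DMaux.resM e X)) := by rw [hs]; ring
end
end

section
/- The subspace 𝓜 is invariant under f: if X ∈ 𝓜 then f(X) ∈ 𝓜. -/
open scoped Matrix

noncomputable section

section aux

variable {N C M : ℕ} (e : Fin M → EuclideanSpace ℝ (Fin N))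

/-- Orthonormal nonnegative vectors have disjoint supports. -/
lemma disj_support (he : Orthonormal ℝ e) (hnonneg : ∀ m i, 0 ≤ e m i)
    {m k : Fin M} (hmk : m ≠ k) (n : Fin N) : e m n * e k n = 0 := by
  have h0 : ∑ i, e m i * e k i = 0 := by
    have := he.2 hmk.symm
    simpa [PiLp.inner_apply, RCLike.inner_apply, conj_trivial] using this
  have := (Finset.sum_eq_zero_iff_of_nonneg
    (fun i _ => mul_nonneg (hnonneg m i) (hnonneg k i))).mp h0
  exact this n (Finset.mem_univ n)

lemma relu_mem (he : Orthonormal ℝ e) (hnonneg : ∀ m i, 0 ≤ e m i)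
    {Y : Matrix (Fin N) (Fin C) ℝ} (hY : Y ∈ Mspace e) : relu Y ∈ Mspace e := by
  obtain ⟨w, rfl⟩ := hY
  refine ⟨fun m c => max (w m c) 0, ?_⟩
  ext n c
  simp only [relu, Matrix.of_apply, Matrix.sum_apply, Matrix.vecMulVec_apply]
  by_cases h : ∀ m, e m n = 0
  · simp [h]
  · push_neg at h
    obtain ⟨m0, hm0⟩ := h
    have hz : ∀ m, m ≠ m0 → e m n = 0 := by
      intro m hm
      have := disj_support e he hnonneg hm n
      rcases mul_eq_zero.mp this with h' | h'
      · exact h'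
      · exact absurd h' hm0
    rw [Finset.sum_eq_single m0 (fun m _ hm => by simp [hz m hm]) (by simp),
        Finset.sum_eq_single m0 (fun m _ hm => by simp [hz m hm]) (by simp)]
    rw [mul_max_of_nonneg _ _ (hnonneg m0 n), mul_zero]

lemma mul_right_mem {Y : Matrix (Fin N) (Fin C) ℝ} (W : Matrix (Fin C) (Fin C) ℝ)
    (hY : Y ∈ Mspace e) : Y * W ∈ Mspace e := by
  obtain ⟨w, rfl⟩ := hY
  refine ⟨fun m c => ∑ d, w m d * W d c, ?_⟩
  ext n c
  simp only [Matrix.mul_apply, Matrix.sum_apply, Matrix.vecMulVec_apply]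
  simp only [Finset.sum_mul, Finset.mul_sum]
  rw [Finset.sum_comm]
  exact Finset.sum_congr rfl fun m _ => Finset.sum_congr rfl fun d _ => by ring

lemma mul_P_mem (P : Matrix (Fin N) (Fin N) ℝ)
    (hPe : ∀ m, ∃ a : Fin M → ℝ, P.mulVec (e m) = ∑ k, a k • e k)
    {Y : Matrix (Fin N) (Fin C) ℝ} (hY : Y ∈ Mspace e) : P * Y ∈ Mspace e := by
  obtain ⟨w, rfl⟩ := hY
  choose a ha using hPe
  refine ⟨fun k c => ∑ m, a m k * w m c, ?_⟩
  ext n c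
  simp only [Matrix.mul_apply, Matrix.sum_apply, Matrix.vecMulVec_apply]
  have key : ∀ m, ∑ j, P n j * (e m j * w m c) = (∑ k, a m k * e k n) * w m c := by
    intro m
    have h := congrFun (ha m) n
    simp only [Matrix.mulVec, dotProduct] at h
    rw [show ((∑ x : Fin M, a m x • e x) n) = (∑ x : Fin M, a m x • e x : Fin N → ℝ) n
      from by simp] at h
    simp only [Finset.sum_apply] at h
    simp only [show ∀ (r : ℝ) (x : EuclideanSpace ℝ (Fin N)), (r • x.ofLp) n = r * x n
      from fun _ _ => rfl] at h
    rw [← h, Finset.sum_mul]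
    exact Finset.sum_congr rfl fun j _ => by ring
  calc ∑ j, P n j * ∑ m, e m j * w m c
      = ∑ m, ∑ j, P n j * (e m j * w m c) := by
        rw [Finset.sum_comm]; congr 1; ext j; rw [Finset.mul_sum]
    _ = ∑ m, (∑ k, a m k * e k n) * w m c := by simp only [key]
    _ = ∑ k, e k n * ∑ m, a m k * w m c := by
        simp only [Finset.sum_mul, Finset.mul_sum]
        rw [Finset.sum_comm]
        exact Finset.sum_congr rfl fun k _ => Finset.sum_congr rfl fun m _ => by ring

lemma mlp_mem (he : Orthonormal ℝ e) (hnonneg : ∀ m i, 0 ≤ e m i)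
    (Ws : List (Matrix (Fin C) (Fin C) ℝ)) :
    ∀ Y ∈ Mspace e, mlp Ws Y ∈ Mspace e := by
  induction Ws with
  | nil => intro Y hY; exact relu_mem e he hnonneg hY
  | cons W Ws ih =>
      intro Y hY
      have : mlp (W :: Ws) Y = mlp Ws (relu Y * W) := rfl
      rw [this]
      exact ih _ (mul_right_mem e W (relu_mem e he hnonneg hY))

end aux

/-- Let `P ∈ ℝ^{N×N}` be symmetric, `U = span(e 1, …, e M)` a subspace
with an orthonormal basis of entrywise non-negative vectors, invariant under `P`, and let
`f(X) = σ(⋯σ(σ(P X)W₁)W₂⋯W_H)` with `H ≥ 1` weight matrices.  Then `𝓜` is invariant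
under `f`: if `X ∈ 𝓜` then `f(X) ∈ 𝓜`. -/
theorem Mspace_invariant {N C M H : ℕ} (hN : 0 < N) (hC : 0 < C) (hM : 0 < M) (hMN : M ≤ N)
    (hH : 0 < H)
    (P : Matrix (Fin N) (Fin N) ℝ) (hP : P.IsSymm)
    (e : Fin M → EuclideanSpace ℝ (Fin N)) (he : Orthonormal ℝ e)
    (hnonneg : ∀ m i, 0 ≤ e m i)
    (U : Submodule ℝ (EuclideanSpace ℝ (Fin N)))
    (hU : U = Submodule.span ℝ (Set.range e))
    (hinv : ∀ u ∈ U, (WithLp.toLp 2 (P.mulVec u) : EuclideanSpace ℝ (Fin N)) ∈ U)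
    (Ws : List (Matrix (Fin C) (Fin C) ℝ)) (hWs : Ws.length = H)
    (X : Matrix (Fin N) (Fin C) ℝ) (hX : X ∈ Mspace e) :
    mlp Ws (P * X) ∈ Mspace e := by
  have hPe : ∀ m, ∃ a : Fin M → ℝ, P.mulVec (e m) = ∑ k, a k • e k := by
    intro m
    have hem : e m ∈ U := by
      rw [hU]; exact Submodule.subset_span ⟨m, rfl⟩
    have h2 : (WithLp.toLp 2 (P.mulVec (e m)) : EuclideanSpace ℝ (Fin N)) ∈ Submodule.span ℝ (Set.range e) :=
      hU ▸ hinv _ hem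
    obtain ⟨a, ha⟩ := (Submodule.mem_span_range_iff_exists_fun ℝ).mp h2
    exact ⟨a, by rw [ha]⟩
  exact mlp_mem e he hnonneg Ws _ (mul_P_mem e P hPe hX)
end
end

section
/- Let P ∈ ℝ^{N×N} be symmetric with eigenvalues λ_1 ≤ ⋯ ≤ λ_N (listed with multiplicity), and suppose the largest eigenvalue λ_N has multiplicity M, i.e. λ_{N−M} < λ_{N−M+1} = ⋯ = λ_N. Set λ := max_{n ∈ [N−M]} |λ_n|, let U be the eigenspace of P associated with λ_N, and assume U admits an orthonormal basis (e_1,…,e_M) of entrywise non-negative vectors. Then for every X ∈ ℝ^{N×C}, d_𝓜(f(X)) ≤ s·λ · d_𝓜(X). -/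
open scoped Matrix

noncomputable section

attribute [local instance] Matrix.frobeniusNormedAddCommGroup

namespace S7

lemma frob_norm_eq {N C : ℕ} (A : Matrix (Fin N) (Fin C) ℝ) :
    ‖A‖ = Real.sqrt (∑ n, ∑ c, (A n c) ^ 2) := by
  rw [Matrix.frobenius_norm_def, Real.sqrt_eq_rpow]
  congr 1
  refine Finset.sum_congr rfl fun n _ => Finset.sum_congr rfl fun c _ => ?_
  rw [show (2:ℝ) = ((2:ℕ):ℝ) by norm_num, Real.rpow_natCast, Real.norm_eq_abs, sq_abs]

lemma frob_sq {N C : ℕ} (A : Matrix (Fin N) (Fin C) ℝ) :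
    ‖A‖ ^ 2 = ∑ n, ∑ c, (A n c) ^ 2 := by
  rw [frob_norm_eq, Real.sq_sqrt (by positivity)]

lemma enorm_sq {N : ℕ} (x : EuclideanSpace ℝ (Fin N)) : ‖x‖ ^ 2 = ∑ n, (x n) ^ 2 := by
  rw [EuclideanSpace.norm_eq, Real.sq_sqrt (by positivity)]
  exact Finset.sum_congr rfl fun n _ => by rw [Real.norm_eq_abs, sq_abs]

def matCol {N C : ℕ} (A : Matrix (Fin N) (Fin C) ℝ) (c : Fin C) : EuclideanSpace ℝ (Fin N) :=
  WithLp.toLp 2 (fun n => A n c)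

def matRow {N C : ℕ} (A : Matrix (Fin N) (Fin C) ℝ) (n : Fin N) : EuclideanSpace ℝ (Fin C) :=
  WithLp.toLp 2 (A n)

lemma frob_sq_cols {N C : ℕ} (A : Matrix (Fin N) (Fin C) ℝ) :
    ‖A‖ ^ 2 = ∑ c, ‖matCol A c‖ ^ 2 := by
  rw [frob_sq, Finset.sum_comm]
  exact Finset.sum_congr rfl fun c _ => (enorm_sq (matCol A c)).symm

lemma frob_sq_rows {N C : ℕ} (A : Matrix (Fin N) (Fin C) ℝ) :
    ‖A‖ ^ 2 = ∑ n, ‖matRow A n‖ ^ 2 := by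
  rw [frob_sq]
  exact Finset.sum_congr rfl fun n _ => (enorm_sq (matRow A n)).symm

lemma piLp_sum_apply {N : ℕ} {ι : Type*} (s : Finset ι) (f : ι → EuclideanSpace ℝ (Fin N))
    (n : Fin N) : (∑ i ∈ s, f i) n = ∑ i ∈ s, f i n := by
  induction s using Finset.cons_induction with
  | empty => rfl
  | cons i s hi ih => rw [Finset.sum_cons, Finset.sum_cons, PiLp.add_apply, ih]

lemma norm_sq_sum_smul {N : ℕ} {ι : Type*} [Fintype ι] {v : ι → EuclideanSpace ℝ (Fin N)}
    (hv : Orthonormal ℝ v) (a : ι → ℝ) : ‖∑ i, a i • v i‖ ^ 2 = ∑ i, (a i) ^ 2 := by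
  rw [← real_inner_self_eq_norm_sq, sum_inner]
  refine Finset.sum_congr rfl fun i _ => ?_
  rw [real_inner_smul_left, hv.inner_right_fintype, sq]

variable {N C M : ℕ} {e : Fin M → EuclideanSpace ℝ (Fin N)}

lemma zero_mem_Mspace : (0 : Matrix (Fin N) (Fin C) ℝ) ∈ Mspace e := by
  refine ⟨0, ?_⟩
  ext n c
  simp [Matrix.sum_apply, Matrix.vecMulVec_apply]

lemma mem_Mspace_iff {X : Matrix (Fin N) (Fin C) ℝ} :
    X ∈ Mspace e ↔ ∀ c, matCol X c ∈ Submodule.span ℝ (Set.range e) := by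
  constructor
  · rintro ⟨w, rfl⟩ c
    rw [Submodule.mem_span_range_iff_exists_fun]
    refine ⟨fun m => w m c, ?_⟩
    apply PiLp.ext; intro n
    rw [piLp_sum_apply]
    simp only [PiLp.smul_apply, smul_eq_mul, matCol, Matrix.sum_apply, Matrix.vecMulVec_apply]
    exact Finset.sum_congr rfl fun m _ => mul_comm _ _
  · intro h
    have h' : ∀ c, ∃ a : Fin M → ℝ, ∑ m, a m • e m = matCol X c := by
      intro c; exact (Submodule.mem_span_range_iff_exists_fun ℝ).1 (h c)
    choose a ha using h'
    refine ⟨fun m c => a c m, ?_⟩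
    ext n c
    simp only [Matrix.sum_apply, Matrix.vecMulVec_apply]
    rw [show X n c = matCol X c n from rfl, ← ha c, piLp_sum_apply]
    exact Finset.sum_congr rfl fun m _ => mul_comm _ _

lemma mul_mem_Mspace {X : Matrix (Fin N) (Fin C) ℝ} (hX : X ∈ Mspace e)
    (W : Matrix (Fin C) (Fin C) ℝ) : X * W ∈ Mspace e := by
  obtain ⟨w, rfl⟩ := hX
  refine ⟨fun m => fun c => ∑ k, w m k * W k c, ?_⟩
  ext n c
  simp only [Matrix.mul_apply, Matrix.sum_apply, Matrix.vecMulVec_apply, Finset.sum_mul,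
    Finset.mul_sum]
  rw [Finset.sum_comm]
  refine Finset.sum_congr rfl fun m _ => Finset.sum_congr rfl fun k _ => by ring

lemma relu_mem_Mspace (he : Orthonormal ℝ e) (hnonneg : ∀ m i, 0 ≤ e m i)
    {X : Matrix (Fin N) (Fin C) ℝ} (hX : X ∈ Mspace e) : relu X ∈ Mspace e := by
  obtain ⟨w, rfl⟩ := hX
  have hdisj : ∀ (m m' : Fin M), m ≠ m' → ∀ n, e m n * e m' n = 0 := by
    intro m m' hmm n
    have h0 : (inner ℝ (e m') (e m) : ℝ) = 0 := he.2 (Ne.symm hmm)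
    rw [PiLp.inner_apply] at h0
    simp only [RCLike.inner_apply, conj_trivial] at h0
    have hterm : ∀ i ∈ Finset.univ, (0:ℝ) ≤ e m i * e m' i :=
      fun i _ => mul_nonneg (hnonneg m i) (hnonneg m' i)
    exact (Finset.sum_eq_zero_iff_of_nonneg hterm).1 h0 n (Finset.mem_univ n)
  refine ⟨fun m c => max (w m c) 0, ?_⟩
  ext n c
  simp only [relu, Matrix.of_apply, Matrix.sum_apply, Matrix.vecMulVec_apply]
  by_cases hex : ∃ m₀, e m₀ n ≠ 0
  · obtain ⟨m₀, hm₀⟩ := hex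
    have hz : ∀ m, m ≠ m₀ → e m n = 0 := by
      intro m hm
      by_contra hne
      have := hdisj m m₀ hm n
      have h1 : 0 < e m n := lt_of_le_of_ne (hnonneg m n) (Ne.symm hne)
      have h2 : 0 < e m₀ n := lt_of_le_of_ne (hnonneg m₀ n) (Ne.symm hm₀)
      nlinarith
    rw [Finset.sum_eq_single m₀ (fun m _ hm => by rw [hz m hm, zero_mul])
      (fun h => absurd (Finset.mem_univ m₀) h),
      Finset.sum_eq_single m₀ (fun m _ hm => by rw [hz m hm, zero_mul])
      (fun h => absurd (Finset.mem_univ m₀) h)]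
    rw [mul_comm, mul_comm (e m₀ n), max_mul_of_nonneg _ _ (hnonneg m₀ n), zero_mul]
  · push_neg at hex
    simp only [hex, zero_mul, Finset.sum_const_zero, max_self]

lemma dM_le_mul {K : ℝ} (hK : 0 ≤ K) (X X' : Matrix (Fin N) (Fin C) ℝ)
    (h : ∀ Y ∈ Mspace e, ∃ Y' ∈ Mspace (M := M) e, dist X' Y' ≤ K * dist X Y) :
    dM e X' ≤ K * dM e X := by
  have hne : (Mspace (N := N) (C := C) e).Nonempty := ⟨0, zero_mem_Mspace⟩
  rcases eq_or_lt_of_le hK with hK0 | hK0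
  · obtain ⟨Y', hY', hd⟩ := h 0 zero_mem_Mspace
    rw [← hK0] at hd ⊢
    rw [zero_mul] at hd ⊢
    exact le_trans (Metric.infDist_le_dist_of_mem hY') hd
  · refine le_of_forall_pos_le_add fun ε hε => ?_
    have hlt : dM e X < dM e X + ε / K := by
      have : 0 < ε / K := div_pos hε hK0
      linarith
    obtain ⟨Y, hY, hdY⟩ := (Metric.infDist_lt_iff hne).1 hlt
    obtain ⟨Y', hY', hd⟩ := h Y hY
    calc dM e X' ≤ dist X' Y' := Metric.infDist_le_dist_of_mem hY'
      _ ≤ K * dist X Y := hd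
      _ ≤ K * (dM e X + ε / K) := mul_le_mul_of_nonneg_left (le_of_lt hdY) hK
      _ = K * dM e X + ε := by rw [mul_add, mul_div_cancel₀ _ (ne_of_gt hK0)]

lemma mulVec_transpose_norm_le (W : Matrix (Fin C) (Fin C) ℝ) (x : EuclideanSpace ℝ (Fin C)) :
    ‖Matrix.toEuclideanLin Wᵀ x‖ ≤ maxSingularValue W * ‖x‖ := by
  have h2 : Wᵀ = Wᴴ := (Matrix.conjTranspose_eq_transpose_of_trivial W).symm
  rw [h2, Matrix.toEuclideanLin_conjTranspose_eq_adjoint]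
  have h3 := LinearMap.adjoint_toContinuousLinearMap (Matrix.toEuclideanLin W)
  have key : ∀ (T : EuclideanSpace ℝ (Fin C) →ₗ[ℝ] EuclideanSpace ℝ (Fin C))
      (y : EuclideanSpace ℝ (Fin C)), ‖T y‖ ≤ ‖LinearMap.toContinuousLinearMap T‖ * ‖y‖ :=
    fun T y => (LinearMap.toContinuousLinearMap T).le_opNorm y
  refine le_trans (key _ x) ?_
  rw [h3]
  unfold maxSingularValue
  exact mul_le_mul_of_nonneg_right
    (le_of_eq (LinearIsometryEquiv.norm_map ContinuousLinearMap.adjoint _)) (norm_nonneg x)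

lemma le_of_sq_le_sq' {x y : ℝ} (hx : 0 ≤ x) (hy : 0 ≤ y) (h : x ^ 2 ≤ y ^ 2) : x ≤ y := by
  nlinarith

lemma dM_relu_le (he : Orthonormal ℝ e) (hnonneg : ∀ m i, 0 ≤ e m i)
    (X : Matrix (Fin N) (Fin C) ℝ) : dM e (relu X) ≤ dM e X := by
  have := dM_le_mul (e := e) (K := 1) zero_le_one X (relu X) ?_
  · simpa using this
  · intro Y hY
    refine ⟨relu Y, relu_mem_Mspace he hnonneg hY, ?_⟩
    rw [one_mul, dist_eq_norm, dist_eq_norm]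
    refine le_of_sq_le_sq' (norm_nonneg _) (norm_nonneg _) ?_
    rw [frob_sq, frob_sq]
    refine Finset.sum_le_sum fun n _ => Finset.sum_le_sum fun c _ => ?_
    simp only [Matrix.sub_apply, relu, Matrix.of_apply]
    rw [← sq_abs (X n c ⊔ 0 - Y n c ⊔ 0), ← sq_abs (X n c - Y n c)]
    exact pow_le_pow_left₀ (abs_nonneg _) (abs_max_sub_max_le_abs _ _ _) 2

lemma matRow_mul (A : Matrix (Fin N) (Fin C) ℝ) (W : Matrix (Fin C) (Fin C) ℝ) (n : Fin N) :
    matRow (A * W) n = Matrix.toEuclideanLin Wᵀ (matRow A n) := by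
  apply PiLp.ext
  intro c
  show (A * W) n c = (Wᵀ *ᵥ (A n)) c
  simp [Matrix.mul_apply, Matrix.mulVec, dotProduct, Matrix.transpose_apply, mul_comm]

lemma norm_mul_W_le (A : Matrix (Fin N) (Fin C) ℝ) (W : Matrix (Fin C) (Fin C) ℝ) :
    ‖A * W‖ ≤ maxSingularValue W * ‖A‖ := by
  have hmsv : 0 ≤ maxSingularValue W := norm_nonneg _
  refine le_of_sq_le_sq' (norm_nonneg _) (by positivity) ?_
  rw [frob_sq_rows, mul_pow, frob_sq_rows, Finset.mul_sum]
  refine Finset.sum_le_sum fun n _ => ?_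
  rw [matRow_mul, ← mul_pow]
  exact pow_le_pow_left₀ (norm_nonneg _) (mulVec_transpose_norm_le W _) 2

lemma dM_mulW_le (W : Matrix (Fin C) (Fin C) ℝ) (X : Matrix (Fin N) (Fin C) ℝ) :
    dM e (X * W) ≤ maxSingularValue W * dM e X := by
  refine dM_le_mul (norm_nonneg _) X (X * W) fun Y hY => ?_
  refine ⟨Y * W, mul_mem_Mspace hY W, ?_⟩
  rw [dist_eq_norm, dist_eq_norm, ← Matrix.sub_mul]
  exact norm_mul_W_le _ W

lemma matCol_mulP (P : Matrix (Fin N) (Fin N) ℝ) (Z : Matrix (Fin N) (Fin C) ℝ) (c : Fin C) :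
    matCol (P * Z) c = Matrix.toEuclideanLin P (matCol Z c) := by
  apply PiLp.ext
  intro n
  show (P * Z) n c = (P *ᵥ (matCol Z c)) n
  simp [Matrix.mul_apply, Matrix.mulVec, dotProduct, matCol]

lemma list_prod_msv_nonneg (L : List (Matrix (Fin C) (Fin C) ℝ)) :
    0 ≤ (L.map maxSingularValue).prod := by
  induction L with
  | nil => simp
  | cons W L ih =>
    rw [List.map_cons, List.prod_cons]
    exact mul_nonneg (norm_nonneg _) ih

lemma dM_foldl_le (he : Orthonormal ℝ e) (hnonneg : ∀ m i, 0 ≤ e m i)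
    (L : List (Matrix (Fin C) (Fin C) ℝ)) (Z : Matrix (Fin N) (Fin C) ℝ) :
    dM e (L.foldl (fun Z Wh => relu (Z * Wh)) Z) ≤ (L.map maxSingularValue).prod * dM e Z := by
  induction L generalizing Z with
  | nil => simp
  | cons W L ih =>
    rw [List.foldl_cons, List.map_cons, List.prod_cons]
    calc dM e (L.foldl (fun Z Wh => relu (Z * Wh)) (relu (Z * W)))
        ≤ (L.map maxSingularValue).prod * dM e (relu (Z * W)) := ih _
      _ ≤ (L.map maxSingularValue).prod * dM e (Z * W) :=
          mul_le_mul_of_nonneg_left (dM_relu_le he hnonneg _) (list_prod_msv_nonneg L)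
      _ ≤ (L.map maxSingularValue).prod * (maxSingularValue W * dM e Z) :=
          mul_le_mul_of_nonneg_left (dM_mulW_le W Z) (list_prod_msv_nonneg L)
      _ = maxSingularValue W * (L.map maxSingularValue).prod * dM e Z := by ring

/-- key spectral bound on the orthogonal complement -/
lemma P_orth_bound (hN : 0 < N)
    (P : Matrix (Fin N) (Fin N) ℝ)
    (μ : Fin N → ℝ)
    (v : Fin N → EuclideanSpace ℝ (Fin N)) (hv : Orthonormal ℝ v)
    (heig : ∀ n, (WithLp.toLp 2 (P.mulVec (v n)) : EuclideanSpace ℝ (Fin N)) = μ n • v n)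
    (μtop : ℝ) (hmult : ∀ n : Fin N, (N - M ≤ (n : ℕ) ↔ μ n = μtop))
    (lam : ℝ)
    (U : Submodule ℝ (EuclideanSpace ℝ (Fin N)))
    (hU : U = Module.End.eigenspace (Matrix.toEuclideanLin P) μtop)
    (hlam0 : 0 ≤ lam)
    (hlamge : ∀ n : Fin N, (n : ℕ) < N - M → |μ n| ≤ lam)
    {b : EuclideanSpace ℝ (Fin N)} (hb : b ∈ Uᗮ) :
    ‖Matrix.toEuclideanLin P b‖ ≤ lam * ‖b‖ := by
  haveI : Nonempty (Fin N) := ⟨⟨0, hN⟩⟩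
  have hcard : Fintype.card (Fin N) = Module.finrank ℝ (EuclideanSpace ℝ (Fin N)) := by
    simp [finrank_euclideanSpace_fin]
  let vB := basisOfOrthonormalOfCardEqFinrank hv hcard
  have hvB : ⇑vB = v := coe_basisOfOrthonormalOfCardEqFinrank hv hcard
  set l : Fin N → ℝ := fun n => vB.repr b n with hl
  have hbsum : b = ∑ n, l n • v n := by
    conv_lhs => rw [← vB.sum_repr b]
    simp [hvB, hl]
  have hltop : ∀ n, μ n = μtop → l n = 0 := by
    intro n hn
    have hvnU : v n ∈ U := by
      rw [hU, Module.End.mem_eigenspace_iff]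
      have : Matrix.toEuclideanLin P (v n) = (WithLp.toLp 2 (P.mulVec (v n)) : EuclideanSpace ℝ (Fin N)) := rfl
      rw [this, heig n, hn]
    have h0 : (inner ℝ (v n) b : ℝ) = 0 := (Submodule.mem_orthogonal U b).1 hb (v n) hvnU
    have h1 : (inner ℝ (v n) b : ℝ) = l n := by
      conv_lhs => rw [hbsum]
      exact hv.inner_right_fintype l n
    rw [← h1, h0]
  have hPb : Matrix.toEuclideanLin P b = ∑ n, (l n * μ n) • v n := by
    conv_lhs => rw [hbsum]
    rw [map_sum]
    refine Finset.sum_congr rfl fun n _ => ?_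
    rw [map_smul]
    have : Matrix.toEuclideanLin P (v n) = (WithLp.toLp 2 (P.mulVec (v n)) : EuclideanSpace ℝ (Fin N)) := rfl
    rw [this, heig n, smul_smul]
  have hsq : ‖Matrix.toEuclideanLin P b‖ ^ 2 ≤ (lam * ‖b‖) ^ 2 := by
    rw [hPb, norm_sq_sum_smul hv, mul_pow, hbsum, norm_sq_sum_smul hv, Finset.mul_sum]
    refine Finset.sum_le_sum fun n _ => ?_
    by_cases hn : μ n = μtop
    · rw [hltop n hn]; simp
    · have hlt : (n : ℕ) < N - M := by
        by_contra hge
        exact hn ((hmult n).1 (le_of_not_gt hge))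
      have h1 : (μ n) ^ 2 ≤ lam ^ 2 := by
        rw [← sq_abs]
        exact pow_le_pow_left₀ (abs_nonneg _) (hlamge n hlt) 2
      calc (l n * μ n) ^ 2 = (μ n) ^ 2 * (l n) ^ 2 := by ring
        _ ≤ lam ^ 2 * (l n) ^ 2 := mul_le_mul_of_nonneg_right h1 (sq_nonneg _)
  exact le_of_sq_le_sq' (norm_nonneg _) (by positivity) hsq

lemma dM_P_le (hN : 0 < N)
    (P : Matrix (Fin N) (Fin N) ℝ)
    (μ : Fin N → ℝ)
    (v : Fin N → EuclideanSpace ℝ (Fin N)) (hv : Orthonormal ℝ v)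
    (heig : ∀ n, (WithLp.toLp 2 (P.mulVec (v n)) : EuclideanSpace ℝ (Fin N)) = μ n • v n)
    (μtop : ℝ) (hmult : ∀ n : Fin N, (N - M ≤ (n : ℕ) ↔ μ n = μtop))
    (lam : ℝ)
    (U : Submodule ℝ (EuclideanSpace ℝ (Fin N)))
    (hU : U = Module.End.eigenspace (Matrix.toEuclideanLin P) μtop)
    (hlam0 : 0 ≤ lam)
    (hlamge : ∀ n : Fin N, (n : ℕ) < N - M → |μ n| ≤ lam)
    (hspan : Submodule.span ℝ (Set.range e) = U)
    (X : Matrix (Fin N) (Fin C) ℝ) :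
    dM e (P * X) ≤ lam * dM e X := by
  refine dM_le_mul hlam0 X (P * X) fun Y hY => ?_
  set D := X - Y with hD
  set A : Matrix (Fin N) (Fin C) ℝ :=
    Matrix.of fun n c => (U.orthogonalProjection (matCol D c) : EuclideanSpace ℝ (Fin N)) n with hA
  have hcolA : ∀ c, matCol A c
      = (U.orthogonalProjection (matCol D c) : EuclideanSpace ℝ (Fin N)) := fun c => rfl
  have hYA : ∀ c, matCol (Y + A) c ∈ U := by
    intro c
    have h1 : matCol Y c ∈ U := hspan ▸ (mem_Mspace_iff.1 hY c)
    have h2 : matCol A c ∈ U := by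
      rw [hcolA c]; exact SetLike.coe_mem _
    have h3 : matCol (Y + A) c = matCol Y c + matCol A c := by
      apply PiLp.ext; intro n
      show (Y + A) n c = Y n c + A n c
      simp [Matrix.add_apply]
    rw [h3]; exact U.add_mem h1 h2
  refine ⟨P * (Y + A), ?_, ?_⟩
  · rw [mem_Mspace_iff]
    intro c
    rw [matCol_mulP, hspan]
    have hmem := hYA c
    have heq : Matrix.toEuclideanLin P (matCol (Y + A) c) = μtop • (matCol (Y + A) c) :=
      Module.End.mem_eigenspace_iff.1 (hU ▸ hmem)
    rw [heq]
    exact U.smul_mem _ hmem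
  · rw [dist_eq_norm, dist_eq_norm, ← Matrix.mul_sub, sub_add_eq_sub_sub, ← hD]
    refine le_of_sq_le_sq' (norm_nonneg _) (by positivity) ?_
    rw [frob_sq_cols, mul_pow, frob_sq_cols, Finset.mul_sum]
    refine Finset.sum_le_sum fun c _ => ?_
    have hcolB : matCol (D - A) c = matCol D c - matCol A c := by
      apply PiLp.ext; intro n
      show (D - A) n c = D n c - A n c
      simp [Matrix.sub_apply]
    have hmem : matCol (D - A) c ∈ Uᗮ := by
      rw [hcolB, hcolA c]
      exact Submodule.sub_starProjection_mem_orthogonal (K := U) (matCol D c)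
    have hb1 : ‖matCol (P * (D - A)) c‖ ≤ lam * ‖matCol (D - A) c‖ := by
      rw [matCol_mulP]
      exact P_orth_bound hN P μ v hv heig μtop hmult lam U hU hlam0 hlamge hmem
    have hb2 : ‖matCol (D - A) c‖ ^ 2 ≤ ‖matCol D c‖ ^ 2 := by
      have hd : matCol D c = matCol A c + (matCol D c - matCol A c) := by abel
      have hip : (inner ℝ (matCol A c) (matCol D c - matCol A c) : ℝ) = 0 := by
        rw [hcolA c, real_inner_comm]
        exact Submodule.starProjection_inner_eq_zero (K := U) (matCol D c)
          ((U.orthogonalProjection (matCol D c) : U) : EuclideanSpace ℝ (Fin N))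
          (SetLike.coe_mem (U.orthogonalProjection (matCol D c)))
      have hexp : ‖matCol D c‖ ^ 2
          = ‖matCol A c‖ ^ 2 + 2 * (inner ℝ (matCol A c) (matCol D c - matCol A c) : ℝ)
            + ‖matCol D c - matCol A c‖ ^ 2 := by
        conv_lhs => rw [hd]
        exact norm_add_sq_real _ _
      rw [hcolB]
      rw [hip] at hexp
      nlinarith [sq_nonneg ‖matCol A c‖]
    calc ‖matCol (P * (D - A)) c‖ ^ 2 ≤ (lam * ‖matCol (D - A) c‖) ^ 2 :=
          pow_le_pow_left₀ (norm_nonneg _) hb1 2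
      _ = lam ^ 2 * ‖matCol (D - A) c‖ ^ 2 := by ring
      _ ≤ lam ^ 2 * ‖matCol D c‖ ^ 2 := mul_le_mul_of_nonneg_left hb2 (sq_nonneg _)

end S7

/-- **Corollary 3 of the paper.** Let `P ∈ ℝ^{N×N}` be symmetric with
eigenvalues `μ 0 ≤ ⋯ ≤ μ (N-1)` (listed with multiplicity, witnessed by an orthonormal
eigenbasis `v`), and suppose the largest eigenvalue `μtop` has multiplicity exactly `M`
(that is, `μ n = μtop ↔ N - M ≤ n`).  Set `lam := max_{n < N - M} |μ n|`, let `U` be the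
eigenspace of `P` for `μtop`, and assume `U` has an orthonormal basis `(e 1, …, e M)` of
entrywise non-negative vectors.  For `f(X) = σ(⋯σ(σ(P X)W₁)W₂⋯W_H)` with `s` the product
of the largest singular values of the `W_h`, we have `d_𝓜(f(X)) ≤ s·lam·d_𝓜(X)`. -/
theorem dM_layer_le_of_eigen {N C M H : ℕ} (hN : 0 < N) (hC : 0 < C) (hM : 0 < M)
    (hMN : M < N) (hH : 0 < H)
    (P : Matrix (Fin N) (Fin N) ℝ) (hP : P.IsSymm)
    (μ : Fin N → ℝ) (hmono : Monotone μ)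
    (v : Fin N → EuclideanSpace ℝ (Fin N)) (hv : Orthonormal ℝ v)
    (heig : ∀ n, (WithLp.toLp 2 (P.mulVec (v n)) : EuclideanSpace ℝ (Fin N)) = μ n • v n)
    (μtop : ℝ) (hmult : ∀ n : Fin N, (N - M ≤ (n : ℕ) ↔ μ n = μtop))
    (lam : ℝ) (hlam : lam = sSup {x : ℝ | ∃ n : Fin N, (n : ℕ) < N - M ∧ x = |μ n|})
    (U : Submodule ℝ (EuclideanSpace ℝ (Fin N)))
    (hU : U = Module.End.eigenspace (Matrix.toEuclideanLin P) μtop)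
    (e : Fin M → EuclideanSpace ℝ (Fin N)) (he : Orthonormal ℝ e)
    (hspan : Submodule.span ℝ (Set.range e) = U)
    (hnonneg : ∀ m i, 0 ≤ e m i)
    (Ws : List (Matrix (Fin C) (Fin C) ℝ)) (hWs : Ws.length = H)
    (s : ℝ) (hs : s = (Ws.map maxSingularValue).prod)
    (X : Matrix (Fin N) (Fin C) ℝ) :
    dM e (mlp Ws (P * X)) ≤ s * lam * dM e X := by
  have hNM : 0 < N - M := Nat.sub_pos_of_lt hMN
  have hfin : ({x : ℝ | ∃ n : Fin N, (n : ℕ) < N - M ∧ x = |μ n|}).Finite := by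
    refine (Set.finite_range (fun n : Fin N => |μ n|)).subset ?_
    rintro x ⟨n, _, rfl⟩; exact ⟨n, rfl⟩
  have hbdd : BddAbove {x : ℝ | ∃ n : Fin N, (n : ℕ) < N - M ∧ x = |μ n|} := hfin.bddAbove
  have hlamge : ∀ n : Fin N, (n : ℕ) < N - M → |μ n| ≤ lam := by
    intro n hn
    rw [hlam]
    exact le_csSup hbdd ⟨n, hn, rfl⟩
  have hlam0 : 0 ≤ lam := le_trans (abs_nonneg _) (hlamge ⟨0, hN⟩ hNM)
  have hPle : dM e (P * X) ≤ lam * dM e X :=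
    S7.dM_P_le hN P μ v hv heig μtop hmult lam U hU hlam0 hlamge hspan X
  have hs0 : 0 ≤ (Ws.map maxSingularValue).prod := S7.list_prod_msv_nonneg Ws
  have hfold := S7.dM_foldl_le he hnonneg Ws (relu (P * X))
  have hrelu := S7.dM_relu_le he hnonneg (P * X)
  calc dM e (mlp Ws (P * X))
      ≤ (Ws.map maxSingularValue).prod * dM e (relu (P * X)) := hfold
    _ ≤ (Ws.map maxSingularValue).prod * dM e (P * X) :=
        mul_le_mul_of_nonneg_left hrelu hs0
    _ ≤ (Ws.map maxSingularValue).prod * (lam * dM e X) :=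
        mul_le_mul_of_nonneg_left hPle hs0
    _ = s * lam * dM e X := by rw [hs]; ring
end
end

section
/- Suppose the operator norm of P (on all of ℝ^N) is at most λ. Then ‖f(X)‖_F ≤ s·λ·‖X‖_F for every X ∈ ℝ^{N×C}. In particular, for a sequence of such layers f_l with s := sup_l s_l satisfying sλ < 1, the iterates X^{(l+1)} = f_l(X^{(l)}) converge to 0 exponentially for every initial value X^{(0)}. -/
open scoped Matrix
open Filter

noncomputable section

attribute [local instance] Matrix.frobeniusNormedAddCommGroup

/-!
ReLU is entrywise `1`-Lipschitz and fixes `0`, so it does not increase the Frobenius norm.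
Left multiplication by `P` acts on the columns and right multiplication by `W` on the rows
(through `Wᵀ`, whose operator norm is that of its adjoint `W`), so each scales the Frobenius norm
by at most the operator norm. Every layer therefore contracts by `s · λ`, and the iterates are
dominated by a geometric sequence.
-/

open WithLp

local notation "‖" M "‖₂" => ‖LinearMap.toContinuousLinearMap (Matrix.toEuclideanLin M)‖

lemma PiLp.norm_toLp_two_le {ι : Type*} [Fintype ι] {β γ : ι → Type*}
    [∀ i, SeminormedAddCommGroup (β i)] [∀ i, SeminormedAddCommGroup (γ i)]
    {f : ∀ i, β i} {g : ∀ i, γ i} (h : ∀ i, ‖f i‖ ≤ ‖g i‖) :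
    ‖toLp 2 f‖ ≤ ‖toLp 2 g‖ := by
  rw [PiLp.norm_eq_of_L2, PiLp.norm_eq_of_L2]
  gcongr with i
  exact h i

namespace Matrix

variable {l m n : Type*} [Fintype l] [Fintype m] [Fintype n]

lemma frobenius_norm_eq_norm_rows (A : Matrix m n ℝ) :
    ‖A‖ = ‖toLp 2 fun i => toLp 2 (A i)‖ := rfl

lemma frobenius_norm_le_of_norm_row_le {A : Matrix m n ℝ} {B : Matrix m l ℝ} {c : ℝ}
    (hc : 0 ≤ c) (h : ∀ i, ‖toLp 2 (A i)‖ ≤ c * ‖toLp 2 (B i)‖) : ‖A‖ ≤ c * ‖B‖ := by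
  rw [frobenius_norm_eq_norm_rows, frobenius_norm_eq_norm_rows, ← Real.norm_of_nonneg hc,
    ← norm_smul]
  refine PiLp.norm_toLp_two_le fun i => ?_
  simpa [norm_smul, abs_of_nonneg hc] using h i

variable [DecidableEq n]

lemma norm_toLp_mulVec_le (M : Matrix m n ℝ) (v : n → ℝ) :
    ‖toLp 2 (M *ᵥ v)‖ ≤ ‖M‖₂ * ‖toLp 2 v‖ :=
  (LinearMap.toContinuousLinearMap (toEuclideanLin M)).le_opNorm (toLp 2 v)

variable [DecidableEq m]

lemma opNorm_toEuclideanLin_transpose (M : Matrix m n ℝ) : ‖Mᵀ‖₂ = ‖M‖₂ := by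
  rw [← conjTranspose_eq_transpose_of_trivial, toEuclideanLin_conjTranspose_eq_adjoint,
    LinearMap.adjoint_toContinuousLinearMap]
  exact ContinuousLinearMap.adjoint.norm_map _

lemma frobenius_norm_mul_le_opNorm_right (Z : Matrix l m ℝ) (W : Matrix m n ℝ) :
    ‖Z * W‖ ≤ ‖W‖₂ * ‖Z‖ := by
  refine frobenius_norm_le_of_norm_row_le (norm_nonneg _) fun i => ?_
  rw [mul_apply_eq_vecMul, ← opNorm_toEuclideanLin_transpose, ← mulVec_transpose]
  exact norm_toLp_mulVec_le Wᵀ (Z i)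

lemma frobenius_norm_mul_le_opNorm_left (M : Matrix m n ℝ) (Y : Matrix n l ℝ) :
    ‖M * Y‖ ≤ ‖M‖₂ * ‖Y‖ := by
  rw [← frobenius_norm_transpose, transpose_mul, ← frobenius_norm_transpose Y,
    ← opNorm_toEuclideanLin_transpose M]
  exact frobenius_norm_mul_le_opNorm_right Yᵀ Mᵀ

end Matrix

lemma norm_relu_le {N C : ℕ} (Y : Matrix (Fin N) (Fin C) ℝ) : ‖relu Y‖ ≤ ‖Y‖ := by
  rw [Matrix.frobenius_norm_eq_norm_rows, Matrix.frobenius_norm_eq_norm_rows]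
  refine PiLp.norm_toLp_two_le fun n => PiLp.norm_toLp_two_le fun c => ?_
  change |max (Y n c) 0| ≤ |Y n c|
  rw [abs_of_nonneg (le_max_right _ _)]
  exact max_le (le_abs_self _) (abs_nonneg _)

lemma maxSingularValue_prod_nonneg {C : ℕ} (Ws : List (Matrix (Fin C) (Fin C) ℝ)) :
    0 ≤ (Ws.map maxSingularValue).prod :=
  List.prod_nonneg fun x hx => by
    obtain ⟨W, -, rfl⟩ := List.mem_map.1 hx
    exact norm_nonneg _

lemma norm_foldl_relu_mul_le {N C : ℕ} (Ws : List (Matrix (Fin C) (Fin C) ℝ))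
    (Z : Matrix (Fin N) (Fin C) ℝ) :
    ‖Ws.foldl (fun Z W => relu (Z * W)) Z‖ ≤ (Ws.map maxSingularValue).prod * ‖Z‖ := by
  induction Ws generalizing Z with
  | nil => simp
  | cons W Ws ih =>
    calc ‖Ws.foldl (fun Z W => relu (Z * W)) (relu (Z * W))‖
        ≤ (Ws.map maxSingularValue).prod * ‖relu (Z * W)‖ := ih _
      _ ≤ (Ws.map maxSingularValue).prod * (maxSingularValue W * ‖Z‖) := by
          gcongr
          · exact maxSingularValue_prod_nonneg Ws
          · exact (norm_relu_le _).trans (Matrix.frobenius_norm_mul_le_opNorm_right Z W)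
      _ = ((W :: Ws).map maxSingularValue).prod * ‖Z‖ := by
          rw [List.map_cons, List.prod_cons]
          ring

lemma norm_mlp_le {N C : ℕ} (Ws : List (Matrix (Fin C) (Fin C) ℝ))
    (Y : Matrix (Fin N) (Fin C) ℝ) : ‖mlp Ws Y‖ ≤ (Ws.map maxSingularValue).prod * ‖Y‖ :=
  (norm_foldl_relu_mul_le Ws (relu Y)).trans <|
    mul_le_mul_of_nonneg_left (norm_relu_le Y) (maxSingularValue_prod_nonneg Ws)

theorem frobenius_iterates_le_general {N C : ℕ}
    (P : Matrix (Fin N) (Fin N) ℝ) (lam : ℝ)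
    (hlam : ‖LinearMap.toContinuousLinearMap (Matrix.toEuclideanLin P)‖ ≤ lam)
    (Ws : ℕ → List (Matrix (Fin C) (Fin C) ℝ))
    (s : ℝ) (hs : ∀ l, ((Ws l).map maxSingularValue).prod ≤ s)
    (X : ℕ → Matrix (Fin N) (Fin C) ℝ)
    (hrec : ∀ l, X (l + 1) = mlp (Ws l) (P * X l)) :
    (∀ l (Y : Matrix (Fin N) (Fin C) ℝ), ‖mlp (Ws l) (P * Y)‖ ≤ s * lam * ‖Y‖) ∧
      (∀ l, ‖X l‖ ≤ (s * lam) ^ l * ‖X 0‖) ∧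
      (s * lam < 1 → Tendsto (fun l => ‖X l‖) atTop (nhds 0)) := by
  have hlam0 : 0 ≤ lam := (norm_nonneg _).trans hlam
  have hs0 : 0 ≤ s := (maxSingularValue_prod_nonneg (Ws 0)).trans (hs 0)
  have layer (l : ℕ) (Y : Matrix (Fin N) (Fin C) ℝ) : ‖mlp (Ws l) (P * Y)‖ ≤ s * lam * ‖Y‖ :=
    calc ‖mlp (Ws l) (P * Y)‖ ≤ ((Ws l).map maxSingularValue).prod * ‖P * Y‖ := norm_mlp_le _ _
      _ ≤ s * (lam * ‖Y‖) :=
          mul_le_mul (hs l) ((Matrix.frobenius_norm_mul_le_opNorm_left P Y).trans (by gcongr))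
            (norm_nonneg _) hs0
      _ = s * lam * ‖Y‖ := (mul_assoc _ _ _).symm
  have iterates (l : ℕ) : ‖X l‖ ≤ (s * lam) ^ l * ‖X 0‖ :=
    le_geom (u := fun l => ‖X l‖) (by positivity) l fun k _ => hrec k ▸ layer k (X k)
  refine ⟨layer, iterates, fun hlt => squeeze_zero (fun _ => norm_nonneg _) iterates ?_⟩
  simpa using (tendsto_pow_atTop_nhds_zero_of_lt_one (by positivity) hlt).mul_const ‖X 0‖

/-- **convergence to the trivial fixed point.** Let `P ∈ ℝ^{N×N}` be
symmetric with operator norm at most `lam`.  For layers `f_l(X) = σ(⋯σ(σ(P X)W_{l,1})⋯)`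
with `s_l` the product of the largest singular values of the weights of layer `l` and
`s = sup_l s_l`, we have `‖f_l(X)‖_F ≤ s_l·lam·‖X‖_F ≤ s·lam·‖X‖_F`; in particular for the
iterates `X^{(l+1)} = f_l(X^{(l)})`, `‖X^{(l)}‖_F ≤ (s·lam)^l‖X^{(0)}‖_F`, and if
`s·lam < 1` they converge to `0` exponentially for every initial value. -/
theorem frobenius_iterates_le {N C : ℕ} (hN : 0 < N) (hC : 0 < C)
    (P : Matrix (Fin N) (Fin N) ℝ) (hP : P.IsSymm) (lam : ℝ)
    (hlam : ‖LinearMap.toContinuousLinearMap (Matrix.toEuclideanLin P)‖ ≤ lam)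
    (Ws : ℕ → List (Matrix (Fin C) (Fin C) ℝ)) (hWs : ∀ l, 0 < (Ws l).length)
    (s : ℝ) (hs : ∀ l, ((Ws l).map maxSingularValue).prod ≤ s)
    (X : ℕ → Matrix (Fin N) (Fin C) ℝ)
    (hrec : ∀ l, X (l + 1) = mlp (Ws l) (P * X l)) :
    (∀ l (Y : Matrix (Fin N) (Fin C) ℝ), ‖mlp (Ws l) (P * Y)‖ ≤ s * lam * ‖Y‖) ∧
      (∀ l, ‖X l‖ ≤ (s * lam) ^ l * ‖X 0‖) ∧
      (s * lam < 1 → Tendsto (fun l => ‖X l‖) atTop (nhds 0)) :=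
  frobenius_iterates_le_general P lam hlam Ws s hs X hrec
end
end

section
/- The largest eigenvalue μ̃_N of the augmented normalized Laplacian Δ̃ of G is at most the largest eigenvalue μ_N of the normalized Laplacian Δ of G: μ̃_N ≤ μ_N. -/
open scoped Matrix

noncomputable section

/-- The augmented normalized Laplacian `Δ̃ = I − D̃^{-1/2} Ã D̃^{-1/2}` of a simple graph,
where `Ã = A + I` and `D̃ = D + I`. -/
def augNormLap {N : ℕ} (G : SimpleGraph (Fin N)) [DecidableRel G.Adj] :
    Matrix (Fin N) (Fin N) ℝ :=
  1 - Matrix.diagonal (fun i => (Real.sqrt ((G.degree i : ℝ) + 1))⁻¹) *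
        (G.adjMatrix ℝ + 1) *
      Matrix.diagonal (fun i => (Real.sqrt ((G.degree i : ℝ) + 1))⁻¹)

/-- The normalized Laplacian `Δ = D^{-1/2} (D − A) D^{-1/2}` of a simple graph, where the
diagonal entries of `D^{-1/2}` are `deg(i)^{-1/2}` when `deg(i) ≠ 0` and `0` otherwise. -/
def normLap {N : ℕ} (G : SimpleGraph (Fin N)) [DecidableRel G.Adj] :
    Matrix (Fin N) (Fin N) ℝ :=
  Matrix.diagonal (fun i => if G.degree i = 0 then 0 else (Real.sqrt (G.degree i : ℝ))⁻¹) *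
    G.lapMatrix ℝ *
    Matrix.diagonal (fun i => if G.degree i = 0 then 0 else (Real.sqrt (G.degree i : ℝ))⁻¹)

open Matrix
open scoped RealInnerProductSpace

namespace AugAux

variable {N : ℕ}

/-- Rayleigh quotient bound from the max eigenvalue, for a Hermitian real matrix. -/
lemma rayleigh_le {M : Matrix (Fin N) (Fin N) ℝ} (hM : M.IsHermitian) {b : ℝ}
    (hmax : ∀ c : ℝ, Module.End.HasEigenvalue (Matrix.toEuclideanLin M) c → c ≤ b)
    (v : EuclideanSpace ℝ (Fin N)) :
    ⟪(Matrix.toEuclideanLin M) v, v⟫ ≤ b * ‖v‖ ^ 2 := by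
  have hS : (Matrix.toEuclideanLin M).IsSymmetric :=
    (Matrix.isHermitian_iff_isSymmetric).mp hM
  have hn : Module.finrank ℝ (EuclideanSpace ℝ (Fin N)) = N := finrank_euclideanSpace_fin
  set B := hS.eigenvectorBasis hn with hB
  have hrepr : ∀ w : EuclideanSpace ℝ (Fin N), ⟪w, v⟫ = ∑ i, B.repr w i * B.repr v i := by
    intro w
    rw [← B.repr.inner_map_map w v]
    simp only [PiLp.inner_apply, RCLike.inner_apply, conj_trivial]
    exact Finset.sum_congr rfl fun i _ => mul_comm _ _
  have h1 : ⟪(Matrix.toEuclideanLin M) v, v⟫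
      = ∑ i, hS.eigenvalues hn i * (B.repr v i) ^ 2 := by
    rw [hrepr]
    refine Finset.sum_congr rfl fun i _ => ?_
    rw [hB, hS.eigenvectorBasis_apply_self_apply hn v i]
    simp only [RCLike.ofReal_real_eq_id, id_eq]
    ring
  have h2 : b * ‖v‖ ^ 2 = ∑ i, b * (B.repr v i) ^ 2 := by
    rw [← Finset.mul_sum]
    congr 1
    rw [← real_inner_self_eq_norm_sq, hrepr]
    exact Finset.sum_congr rfl fun i _ => by ring
  rw [h1, h2]
  exact Finset.sum_le_sum fun i _ => mul_le_mul_of_nonneg_right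
    (hmax _ (hS.hasEigenvalue_eigenvalues hn i)) (sq_nonneg _)

lemma inner_toEuclideanLin (M : Matrix (Fin N) (Fin N) ℝ) (x : Fin N → ℝ) :
    ⟪Matrix.toEuclideanLin M ((WithLp.equiv 2 (Fin N → ℝ)).symm x),
      (WithLp.equiv 2 (Fin N → ℝ)).symm x⟫ = (M *ᵥ x) ⬝ᵥ x := by
  show x ⬝ᵥ star (M *ᵥ x) = _
  rw [star_trivial, dotProduct_comm]

/-- Conjugation of a quadratic form by a diagonal matrix. -/
lemma quad_diag_conj (M : Matrix (Fin N) (Fin N) ℝ) (f : Fin N → ℝ) (x : Fin N → ℝ) :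
    ((Matrix.diagonal f * M * Matrix.diagonal f) *ᵥ x) ⬝ᵥ x
      = (M *ᵥ (fun i => f i * x i)) ⬝ᵥ (fun i => f i * x i) := by
  have hD : ∀ w : Fin N → ℝ, Matrix.diagonal f *ᵥ w = fun i => f i * w i := by
    intro w; ext i; rw [Matrix.mulVec_diagonal]
  rw [← Matrix.mulVec_mulVec, ← Matrix.mulVec_mulVec, hD, hD]
  simp only [dotProduct]
  exact Finset.sum_congr rfl fun i _ => by ring

variable (G : SimpleGraph (Fin N)) [DecidableRel G.Adj]

lemma lap_entry_zero_right {i j : Fin N} (hd : G.degree j = 0) :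
    G.lapMatrix ℝ i j = 0 := by
  have hadj : ¬ G.Adj i j := by
    intro h
    have : 0 < G.degree j := (G.degree_pos_iff_exists_adj j).mpr ⟨i, h.symm⟩
    omega
  by_cases hij : i = j
  · subst hij
    simp [SimpleGraph.lapMatrix, SimpleGraph.degMatrix, hd, hadj]
  · simp [SimpleGraph.lapMatrix, SimpleGraph.degMatrix, Matrix.diagonal_apply_ne _ hij, hadj]

lemma lap_entry_zero_left {i j : Fin N} (hd : G.degree i = 0) :
    G.lapMatrix ℝ i j = 0 := by
  have h := congrFun (congrFun (G.isSymm_lapMatrix (R := ℝ)) i) j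
  rw [Matrix.transpose_apply] at h
  rw [← h]
  exact lap_entry_zero_right G hd

lemma augNormLap_eq :
    augNormLap G = Matrix.diagonal (fun i => (Real.sqrt ((G.degree i : ℝ) + 1))⁻¹) *
      G.lapMatrix ℝ *
      Matrix.diagonal (fun i => (Real.sqrt ((G.degree i : ℝ) + 1))⁻¹) := by
  set S := Matrix.diagonal (fun i => (Real.sqrt ((G.degree i : ℝ) + 1))⁻¹) with hSdef
  have hD : G.degMatrix ℝ + 1 = Matrix.diagonal (fun i => (G.degree i : ℝ) + 1) := by
    rw [SimpleGraph.degMatrix, ← Matrix.diagonal_one, Matrix.diagonal_add]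
  have key : S * (G.degMatrix ℝ + 1) * S = 1 := by
    rw [hSdef, hD, Matrix.diagonal_mul_diagonal, Matrix.diagonal_mul_diagonal,
      ← Matrix.diagonal_one]
    refine congrArg _ (funext fun i => ?_)
    have hpos : 0 < (G.degree i : ℝ) + 1 := by positivity
    have hs : Real.sqrt ((G.degree i : ℝ) + 1) * Real.sqrt ((G.degree i : ℝ) + 1)
        = (G.degree i : ℝ) + 1 := Real.mul_self_sqrt hpos.le
    have hne : Real.sqrt ((G.degree i : ℝ) + 1) ≠ 0 := by positivity
    field_simp
    rw [Real.sq_sqrt hpos.le]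
  have hlap : G.lapMatrix ℝ = (G.degMatrix ℝ + 1) - (G.adjMatrix ℝ + 1) := by
    rw [SimpleGraph.lapMatrix]; abel
  rw [augNormLap, hlap, Matrix.mul_sub, Matrix.sub_mul, key]

lemma posSemidef_normLap : (normLap G).PosSemidef := by
  have h := (SimpleGraph.posSemidef_lapMatrix ℝ G).mul_mul_conjTranspose_same
    (Matrix.diagonal (fun i => if G.degree i = 0 then (0:ℝ)
      else (Real.sqrt (G.degree i : ℝ))⁻¹))
  rw [Matrix.diagonal_conjTranspose] at h
  simpa [normLap] using h

lemma posSemidef_augNormLap : (augNormLap G).PosSemidef := by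
  rw [augNormLap_eq]
  have h := (SimpleGraph.posSemidef_lapMatrix ℝ G).mul_mul_conjTranspose_same
    (Matrix.diagonal (fun i => (Real.sqrt ((G.degree i : ℝ) + 1))⁻¹))
  rw [Matrix.diagonal_conjTranspose] at h
  simpa using h

end AugAux

/-- The largest eigenvalue of the augmented normalized Laplacian `Δ̃` of a
simple graph `G` is at most the largest eigenvalue of the normalized Laplacian `Δ` of `G`:
every eigenvalue `a` of `Δ̃` is at most the largest eigenvalue `b` of `Δ`. -/
theorem augNormLap_max_eigenvalue_le {N : ℕ} (G : SimpleGraph (Fin N)) [DecidableRel G.Adj]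
    (a b : ℝ)
    (ha : Module.End.HasEigenvalue (Matrix.toEuclideanLin (augNormLap G)) a)
    (hb : Module.End.HasEigenvalue (Matrix.toEuclideanLin (normLap G)) b)
    (hbmax : ∀ c : ℝ, Module.End.HasEigenvalue (Matrix.toEuclideanLin (normLap G)) c → c ≤ b) :
    a ≤ b := by
  classical
  -- b is nonnegative
  have hb0 : 0 ≤ b := by
    obtain ⟨w, hw⟩ := hb.exists_hasEigenvector
    have h1 : ⟪Matrix.toEuclideanLin (normLap G) w, w⟫ = b * ‖w‖ ^ 2 := by
      rw [hw.apply_eq_smul, real_inner_smul_left, real_inner_self_eq_norm_sq]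
    have h2 : ⟪Matrix.toEuclideanLin (normLap G) w, w⟫
        = (normLap G *ᵥ (WithLp.equiv 2 (Fin N → ℝ) w)) ⬝ᵥ (WithLp.equiv 2 (Fin N → ℝ) w) := by
      rw [← AugAux.inner_toEuclideanLin]
      simp
    have h3 : 0 ≤ (normLap G *ᵥ (WithLp.equiv 2 (Fin N → ℝ) w)) ⬝ᵥ (WithLp.equiv 2 (Fin N → ℝ) w) := by
      have := (AugAux.posSemidef_normLap G).dotProduct_mulVec_nonneg (WithLp.equiv 2 (Fin N → ℝ) w)
      simpa [dotProduct_comm] using this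
    have hwpos : 0 < ‖w‖ ^ 2 := pow_pos (norm_pos_iff.mpr hw.right) 2
    nlinarith [h1, h2.symm.trans h1]
  obtain ⟨v, hv⟩ := ha.exists_hasEigenvector
  set x : Fin N → ℝ := WithLp.equiv 2 (Fin N → ℝ) v with hx
  have hvx : (WithLp.equiv 2 (Fin N → ℝ)).symm x = v := by simp [hx]
  set y : Fin N → ℝ := fun i => (Real.sqrt ((G.degree i : ℝ) + 1))⁻¹ * x i with hy
  set z : Fin N → ℝ := fun i => Real.sqrt (G.degree i : ℝ) * y i with hz
  set z' : EuclideanSpace ℝ (Fin N) := (WithLp.equiv 2 (Fin N → ℝ)).symm z with hz'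
  set u : Fin N → ℝ := fun i => if G.degree i = 0 then 0 else y i with hu
  -- a * ‖v‖² is the quadratic form of the augmented Laplacian at x
  have hA1 : a * ‖v‖ ^ 2 = (augNormLap G *ᵥ x) ⬝ᵥ x := by
    rw [← AugAux.inner_toEuclideanLin, hvx, hv.apply_eq_smul, real_inner_smul_left,
      real_inner_self_eq_norm_sq]
  have hQ1 : (augNormLap G *ᵥ x) ⬝ᵥ x = (G.lapMatrix ℝ *ᵥ y) ⬝ᵥ y := by
    rw [AugAux.augNormLap_eq, AugAux.quad_diag_conj, ← hy]
  have hLu : G.lapMatrix ℝ *ᵥ u = G.lapMatrix ℝ *ᵥ y := by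
    ext i
    simp only [Matrix.mulVec, dotProduct]
    refine Finset.sum_congr rfl fun j _ => ?_
    by_cases hd : G.degree j = 0
    · rw [AugAux.lap_entry_zero_right G hd, zero_mul, zero_mul]
    · rw [hu]; simp [hd]
  have hQ2 : (G.lapMatrix ℝ *ᵥ u) ⬝ᵥ u = (G.lapMatrix ℝ *ᵥ y) ⬝ᵥ y := by
    rw [hLu]
    simp only [dotProduct]
    refine Finset.sum_congr rfl fun i _ => ?_
    by_cases hd : G.degree i = 0
    · have hrow : (G.lapMatrix ℝ *ᵥ y) i = 0 := by
        simp only [Matrix.mulVec, dotProduct]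
        exact Finset.sum_eq_zero fun j _ => by
          rw [AugAux.lap_entry_zero_left G hd, zero_mul]
      rw [hrow, zero_mul, zero_mul]
    · rw [hu]; simp [hd]
  have hsz : (fun i => (if G.degree i = 0 then (0:ℝ)
      else (Real.sqrt (G.degree i : ℝ))⁻¹) * z i) = u := by
    funext i
    by_cases hd : G.degree i = 0
    · simp [hd, hu]
    · have hdeg : (0:ℝ) < (G.degree i : ℝ) := by
        exact_mod_cast Nat.pos_of_ne_zero hd
      have hne : Real.sqrt (G.degree i : ℝ) ≠ 0 := by positivity
      rw [hz, hu]
      simp only [hd, if_false]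
      field_simp
  have hQ3 : (normLap G *ᵥ z) ⬝ᵥ z = (G.lapMatrix ℝ *ᵥ y) ⬝ᵥ y := by
    rw [normLap, AugAux.quad_diag_conj, hsz, hQ2]
  -- Rayleigh bound for the normalized Laplacian
  have hray : (normLap G *ᵥ z) ⬝ᵥ z ≤ b * ‖z'‖ ^ 2 := by
    have h := AugAux.rayleigh_le (AugAux.posSemidef_normLap G).isHermitian hbmax z'
    rwa [hz', AugAux.inner_toEuclideanLin] at h
  -- norm computations
  have hnz : ‖z'‖ ^ 2 = z ⬝ᵥ z := by
    rw [← real_inner_self_eq_norm_sq, hz', EuclideanSpace.inner_eq_star_dotProduct]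
    simp
  have hnv : ‖v‖ ^ 2 = x ⬝ᵥ x := by
    rw [← real_inner_self_eq_norm_sq, ← hvx, EuclideanSpace.inner_eq_star_dotProduct]
    simp
  have hle : z ⬝ᵥ z ≤ x ⬝ᵥ x := by
    simp only [dotProduct]
    refine Finset.sum_le_sum fun i _ => ?_
    have hd0 : (0:ℝ) ≤ (G.degree i : ℝ) := Nat.cast_nonneg _
    have hz2 : z i * z i = (G.degree i : ℝ) * (y i * y i) := by
      rw [hz]
      simp only
      rw [mul_mul_mul_comm, Real.mul_self_sqrt hd0]
    have hx2 : x i * x i = ((G.degree i : ℝ) + 1) * (y i * y i) := by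
      have hpos : (0:ℝ) < (G.degree i : ℝ) + 1 := by positivity
      have hne : Real.sqrt ((G.degree i : ℝ) + 1) ≠ 0 := by positivity
      have hxi : x i = Real.sqrt ((G.degree i : ℝ) + 1) * y i := by
        rw [hy]
        simp only
        field_simp
      rw [hxi, mul_mul_mul_comm, Real.mul_self_sqrt hpos.le]
    rw [hz2, hx2]
    nlinarith [mul_self_nonneg (y i)]
  have hvpos : 0 < ‖v‖ ^ 2 := pow_pos (norm_pos_iff.mpr hv.right) 2
  have hfinal : a * ‖v‖ ^ 2 ≤ b * ‖v‖ ^ 2 := by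
    calc a * ‖v‖ ^ 2 = (G.lapMatrix ℝ *ᵥ y) ⬝ᵥ y := by rw [hA1, hQ1]
      _ = (normLap G *ᵥ z) ⬝ᵥ z := hQ3.symm
      _ ≤ b * ‖z'‖ ^ 2 := hray
      _ = b * (z ⬝ᵥ z) := by rw [hnz]
      _ ≤ b * (x ⬝ᵥ x) := mul_le_mul_of_nonneg_left hle hb0
      _ = b * ‖v‖ ^ 2 := by rw [hnv]
  exact le_of_mul_le_mul_right hfinal hvpos
end
end

section
/- For every simple undirected graph G on N nodes, the largest eigenvalue μ̃_N of the augmented normalized Laplacian Δ̃ of G satisfies μ̃_N < 2. -/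
open scoped Matrix

noncomputable section

/-- For every simple undirected graph `G` on `N` nodes, every eigenvalue
of the augmented normalized Laplacian `Δ̃` of `G` is strictly less than `2`; in particular
the largest eigenvalue satisfies `μ̃_N < 2`. -/
theorem augNormLap_eigenvalue_lt_two {N : ℕ} (G : SimpleGraph (Fin N)) [DecidableRel G.Adj]
    (a : ℝ) (ha : Module.End.HasEigenvalue (Matrix.toEuclideanLin (augNormLap G)) a) :
    a < 2 := by
  classical
  obtain ⟨v, hv⟩ := ha.exists_hasEigenvector
  set x : Fin N → ℝ := (WithLp.equiv 2 (Fin N → ℝ)) v with hxdef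
  have hx0 : x ≠ 0 := by rw [hxdef]; simpa using hv.2
  have hmul : (augNormLap G) *ᵥ x = a • x := by
    have h1 := congrArg (WithLp.equiv 2 (Fin N → ℝ)) hv.apply_eq_smul
    simpa [hxdef] using h1
  -- notation
  set A : Matrix (Fin N) (Fin N) ℝ := G.adjMatrix ℝ with hA
  set d : Fin N → ℝ := fun i => (Real.sqrt ((G.degree i : ℝ) + 1))⁻¹ with hd
  set y : Fin N → ℝ := fun i => d i * x i with hy
  have hpos : ∀ i, (0:ℝ) < (G.degree i : ℝ) + 1 := fun i => by positivity
  have hsq : ∀ i, Real.sqrt ((G.degree i : ℝ) + 1) ^ 2 = (G.degree i : ℝ) + 1 :=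
    fun i => Real.sq_sqrt (hpos i).le
  have hdne : ∀ i, d i ≠ 0 := fun i => by
    simp only [hd, ne_eq, inv_eq_zero]
    exact (Real.sqrt_pos.2 (hpos i)).ne'
  have hxy : ∀ i, x i = Real.sqrt ((G.degree i : ℝ) + 1) * y i := by
    intro i
    simp only [hy, hd]
    field_simp
  have hxsq : ∀ i, x i ^ 2 = ((G.degree i : ℝ) + 1) * y i ^ 2 := by
    intro i
    rw [hxy i, mul_pow, hsq]
  -- positivity of ∑ x i ^ 2
  obtain ⟨i₀, hi₀⟩ : ∃ i, x i ≠ 0 := by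
    by_contra h
    push_neg at h
    exact hx0 (funext h)
  have hy0 : y i₀ ≠ 0 := by
    intro h
    apply hi₀
    rw [hxy i₀, h, mul_zero]
  have hys : (0:ℝ) < ∑ i, y i ^ 2 := by
    have : (0:ℝ) < y i₀ ^ 2 := by positivity
    refine lt_of_lt_of_le this ?_
    exact Finset.single_le_sum (fun i _ => sq_nonneg (y i)) (Finset.mem_univ i₀)
  have hs : (0:ℝ) < ∑ i, x i ^ 2 := by
    calc (0:ℝ) < y i₀ ^ 2 := by positivity
    _ ≤ x i₀ ^ 2 := by
        rw [hxsq i₀]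
        nlinarith [sq_nonneg (y i₀), hpos i₀, (Nat.cast_nonneg (G.degree i₀) : (0:ℝ) ≤ G.degree i₀)]
    _ ≤ ∑ i, x i ^ 2 := Finset.single_le_sum (fun i _ => sq_nonneg (x i)) (Finset.mem_univ i₀)
  -- quadratic form identity
  have hdeg : ∀ i, (G.degree i : ℝ) = ∑ j, A i j := by
    intro i
    have := SimpleGraph.adjMatrix_mulVec_const_apply (G := G) (α := ℝ) (a := (1:ℝ)) (v := i)
    simp only [Matrix.mulVec, dotProduct, Function.const_apply, mul_one] at this
    rw [hA]
    exact this.symm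
  have hAsymm : ∀ i j, A i j = A j i := by
    intro i j
    simp [hA, SimpleGraph.adjMatrix_apply, G.adj_comm]
  have hAnn : ∀ i j, (0:ℝ) ≤ A i j := by
    intro i j
    simp only [hA, SimpleGraph.adjMatrix_apply]
    split <;> norm_num
  -- the quadratic form value
  have hdot : x ⬝ᵥ ((augNormLap G) *ᵥ x) = a * ∑ i, x i ^ 2 := by
    rw [hmul, dotProduct_smul]
    congr 1
    simp [dotProduct, sq]
  set q : ℝ := ∑ i, ∑ j, A i j * (y i * y j) with hq
  have hdot2 : x ⬝ᵥ ((augNormLap G) *ᵥ x) = (∑ i, x i ^ 2) - (q + ∑ i, y i ^ 2) := by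
    have hdx : Matrix.diagonal d *ᵥ x = y := by
      funext j; simp [Matrix.mulVec_diagonal, hy]
    have expand : (augNormLap G) *ᵥ x =
        x - (fun i => d i * (((A + 1) *ᵥ y) i)) := by
      funext i
      simp only [augNormLap, Matrix.sub_mulVec, Matrix.one_mulVec, ← hA, ← hd,
        ← Matrix.mulVec_mulVec, hdx, Pi.sub_apply, Matrix.mulVec_diagonal]
    rw [expand]
    simp only [dotProduct, Pi.sub_apply]
    have : ∀ i, x i * (x i - d i * ((A + 1) *ᵥ y) i)
        = x i ^ 2 - y i * ((A + 1) *ᵥ y) i := by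
      intro i
      have hxd : x i * d i = y i := by rw [hy]; ring
      calc x i * (x i - d i * ((A + 1) *ᵥ y) i)
          = x i ^ 2 - (x i * d i) * ((A + 1) *ᵥ y) i := by ring
        _ = x i ^ 2 - y i * ((A + 1) *ᵥ y) i := by rw [hxd]
    rw [Finset.sum_congr rfl (fun i _ => this i)]
    rw [Finset.sum_sub_distrib]
    congr 1
    have : ∀ i, y i * ((A + 1) *ᵥ y) i = (∑ j, A i j * (y i * y j)) + y i ^ 2 := by
      intro i
      have h5 : ((A + 1) *ᵥ y) i = (∑ j, A i j * y j) + y i := by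
        rw [Matrix.add_mulVec, Pi.add_apply, Matrix.one_mulVec]
        rfl
      rw [h5, mul_add, Finset.mul_sum]
      congr 1
      · exact Finset.sum_congr rfl fun j _ => by ring
      · ring
    rw [Finset.sum_congr rfl (fun i _ => this i), Finset.sum_add_distrib, hq]
  -- key positivity: 2*(q + ∑ deg i * y i ^2) = ∑∑ A i j * (y i + y j)^2 ≥ 0
  have hkey : (0:ℝ) ≤ q + ∑ i, (G.degree i : ℝ) * y i ^ 2 := by
    have hsum : ∑ i, ∑ j, A i j * (y i + y j) ^ 2
        = 2 * (q + ∑ i, (G.degree i : ℝ) * y i ^ 2) := by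
      have h1 : ∀ i j, A i j * (y i + y j) ^ 2
          = A i j * y i ^ 2 + 2 * (A i j * (y i * y j)) + A i j * y j ^ 2 := by
        intro i j; ring
      simp only [h1, Finset.sum_add_distrib]
      have h2 : ∑ i, ∑ j, A i j * y j ^ 2 = ∑ i, ∑ j, A i j * y i ^ 2 := by
        rw [Finset.sum_comm]
        exact Finset.sum_congr rfl fun i _ => Finset.sum_congr rfl fun j _ => by
          rw [hAsymm j i]
      have h3 : ∑ i, ∑ j, A i j * y i ^ 2 = ∑ i, (G.degree i : ℝ) * y i ^ 2 := by
        refine Finset.sum_congr rfl fun i _ => ?_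
        rw [hdeg i, Finset.sum_mul]
      rw [h2, h3]
      have h4 : ∑ i, ∑ j, 2 * (A i j * (y i * y j)) = 2 * q := by
        rw [hq, Finset.mul_sum]
        exact Finset.sum_congr rfl fun i _ => by rw [Finset.mul_sum]
      rw [h4]
      ring
    have hnn : (0:ℝ) ≤ ∑ i, ∑ j, A i j * (y i + y j) ^ 2 := by
      refine Finset.sum_nonneg fun i _ => Finset.sum_nonneg fun j _ => ?_
      exact mul_nonneg (hAnn i j) (sq_nonneg _)
    linarith [hsum ▸ hnn]
  -- combine
  have hsxy : ∑ i, x i ^ 2 = ∑ i, ((G.degree i : ℝ) + 1) * y i ^ 2 := by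
    exact Finset.sum_congr rfl fun i _ => hxsq i
  have hfinal : a * ∑ i, x i ^ 2 < 2 * ∑ i, x i ^ 2 := by
    rw [← hdot, hdot2]
    have hsplit : ∑ i, ((G.degree i : ℝ) + 1) * y i ^ 2
        = (∑ i, (G.degree i : ℝ) * y i ^ 2) + ∑ i, y i ^ 2 := by
      rw [← Finset.sum_add_distrib]
      exact Finset.sum_congr rfl fun i _ => by ring
    nlinarith [hkey, hys, hs, hsxy, hsplit]
  exact lt_of_mul_lt_mul_right (by linarith [hfinal]) hs.le
end
end

section
/- Let λ ∈ (1, 2), P = (λ/2)·[[1, −1], [−1, 1]] ∈ ℝ^{2×2}, 𝓜 = {(x, y)^⊤ ∈ ℝ² : x = y}, and W = 1. Define f: ℝ² → ℝ² by f(X) := σ(P X W), where σ is the entrywise ReLU. Then Wλ > 1, and d_𝓜(f(X)) = (λ/2)·d_𝓜(X) for every X ∈ ℝ²; in particular d_𝓜(f(X)) < d_𝓜(X) for every X ∉ 𝓜. -/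
open scoped Matrix

noncomputable section

namespace EuclideanSpace

lemma abs_sub_div_sqrt_two_le_dist {v w : EuclideanSpace ℝ (Fin 2)} (hw : w 0 = w 1) :
    |v 0 - v 1| / √2 ≤ dist v w := by
  rw [EuclideanSpace.dist_eq, Fin.sum_univ_two, Real.dist_eq, Real.dist_eq, sq_abs, sq_abs,
    div_le_iff₀ (by positivity), ← Real.sqrt_sq_eq_abs, ← Real.sqrt_mul (by positivity)]
  apply Real.sqrt_le_sqrt
  rw [← hw]
  -- `2 ((a - c)² + (b - c)²) - (a - b)² = (a + b - 2c)²`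
  nlinarith [sq_nonneg (v 0 + v 1 - 2 * w 0)]

theorem infDist_diagonal (v : EuclideanSpace ℝ (Fin 2)) :
    Metric.infDist v {w | w 0 = w 1} = |v 0 - v 1| / √2 := by
  refine le_antisymm ?_
    ((Metric.le_infDist ⟨0, by simp⟩).2 fun _ hw ↦ abs_sub_div_sqrt_two_le_dist hw)
  -- the nearest point of the diagonal is the midpoint `(m, m)`
  set m := (v 0 + v 1) / 2
  calc Metric.infDist v {w | w 0 = w 1}
      ≤ dist v !₂[m, m] := Metric.infDist_le_dist_of_mem rfl
    _ = |v 0 - v 1| / √2 := by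
      rw [EuclideanSpace.dist_eq, Fin.sum_univ_two, Real.dist_eq, Real.dist_eq, sq_abs, sq_abs]
      simp only [Matrix.cons_val_zero, Matrix.cons_val_one]
      rw [show (v 0 - m) ^ 2 + (v 1 - m) ^ 2 = (v 0 - v 1) ^ 2 / 2 by ring,
        Real.sqrt_div (sq_nonneg _), Real.sqrt_sq_eq_abs]

end EuclideanSpace

lemma smul_centering_mulVec_zero (c : ℝ) (X : Fin 2 → ℝ) :
    ((c • Matrix.of ![![(1 : ℝ), -1], ![-1, 1]]) *ᵥ X) 0 = c * (X 0 - X 1) := by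
  simp only [Matrix.mulVec, dotProduct, Fin.sum_univ_two, Matrix.smul_apply, Matrix.of_apply,
    Matrix.cons_val_zero, Matrix.cons_val_one, smul_eq_mul]
  ring

lemma smul_centering_mulVec_one (c : ℝ) (X : Fin 2 → ℝ) :
    ((c • Matrix.of ![![(1 : ℝ), -1], ![-1, 1]]) *ᵥ X) 1 = -(c * (X 0 - X 1)) := by
  simp only [Matrix.mulVec, dotProduct, Fin.sum_univ_two, Matrix.smul_apply, Matrix.of_apply,
    Matrix.cons_val_zero, Matrix.cons_val_one, smul_eq_mul]
  ring

/-- **non-strictness example.** Let `lam ∈ (1, 2)`,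
`P = (lam/2) · [[1, −1], [−1, 1]]`, `𝓜 = {(x, y)ᵀ ∈ ℝ² : x = y}`, `W = 1`, and define
`f(X) = σ(P X W)` with `σ` the entrywise ReLU.  Then `W·lam > 1`, and
`d_𝓜(f(X)) = (lam/2)·d_𝓜(X)` for every `X ∈ ℝ²`; in particular
`d_𝓜(f(X)) < d_𝓜(X)` for every `X ∉ 𝓜`. -/
theorem relu_layer_contracts_distance (lam : ℝ) (hlam1 : 1 < lam) (hlam2 : lam < 2)
    (W : ℝ) (hW : W = 1)
    (Msp : Set (EuclideanSpace ℝ (Fin 2))) (hMsp : Msp = {v | v 0 = v 1})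
    (f : EuclideanSpace ℝ (Fin 2) → EuclideanSpace ℝ (Fin 2))
    (hf : ∀ (X : EuclideanSpace ℝ (Fin 2)) (i : Fin 2),
      f X i = max (((lam / 2) • Matrix.of ![![(1 : ℝ), -1], ![-1, 1]]).mulVec X i * W) 0) :
    W * lam > 1 ∧
    (∀ X : EuclideanSpace ℝ (Fin 2),
      Metric.infDist (f X) Msp = (lam / 2) * Metric.infDist X Msp) ∧
    (∀ X : EuclideanSpace ℝ (Fin 2), X ∉ Msp →
      Metric.infDist (f X) Msp < Metric.infDist X Msp) := by
  subst hW hMsp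
  -- the two entries of `P X` are opposite, so the ReLU preserves their difference
  have hf_sub (X : EuclideanSpace ℝ (Fin 2)) : f X 0 - f X 1 = lam / 2 * (X 0 - X 1) := by
    rw [hf, hf, mul_one, mul_one, smul_centering_mulVec_zero, smul_centering_mulVec_one,
      max_zero_sub_max_neg_zero_eq_self]
  have hscale (X : EuclideanSpace ℝ (Fin 2)) :
      Metric.infDist (f X) {v | v 0 = v 1} = lam / 2 * Metric.infDist X {v | v 0 = v 1} := by
    rw [EuclideanSpace.infDist_diagonal, EuclideanSpace.infDist_diagonal, hf_sub, abs_mul,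
      abs_of_pos (by linarith), mul_div_assoc]
  refine ⟨by linarith, hscale, fun X hX ↦ ?_⟩
  have hpos : 0 < Metric.infDist X {v | v 0 = v 1} := by
    rw [EuclideanSpace.infDist_diagonal]
    exact div_pos (abs_pos.2 (sub_ne_zero.2 hX)) (by positivity)
  rw [hscale]
  exact mul_lt_of_lt_one_left hpos (by linarith)
end
end
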